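/- arXiv:1306.3538 — 5 statements merged into one kernel-verified Lean document; each statement's English description precedes it below -/
import Mathlib

section
/- Let l=[i,j] and l'=[i',j'] be two intervals with i<i'<j<j' (type A), and let a_l, a_{l'} ∈ {↑,↓}×{↑,↓} be assignments of their left and right endpoints to top or bottom. Define that (l,l') with assignments (a_l,a_{l'}) forces a crossing iff in every admissible layout of just these two lines on the path satisfying the periphery condition with these endpoint assignments, the lines cross. Then the pair forces a crossing if and only if: a_l=(↑,↑) and the first component of a_{l'} is ↑; or a_l=(↑,↓) and the first component of a_{l'} is ↓; or a_l=(↓,↑) and the first component of a_{l'} is ↑; or a_l=(↓,↓) and the first component of a_{l'} is ↓. In particular, whether two type-A lines must cross depends only on both endpoints of l and the left endpoint of l'. -/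
/-- A layout of two lines `l`, `l'` on their common interval of edges `m`
(with `lo ≤ m < hi`, edge `m` joining stations `m` and `m+1`): `left m`
(resp. `right m`) records whether `l` is drawn above `l'` at the left
(resp. right) end of edge `m`.  Admissibility: the relative order does not
change when passing through an interior station. -/
structure TwoLineLayout (lo hi : ℤ) where
  left : ℤ → Bool
  right : ℤ → Bool
  admissible : ∀ m : ℤ, lo < m → m < hi → right (m - 1) = left m

/-- The two lines cross: on some common edge their relative order changes. -/
def TwoLineLayout.Crosses {lo hi : ℤ} (Lay : TwoLineLayout lo hi) : Prop :=
  ∃ m : ℤ, lo ≤ m ∧ m < hi ∧ Lay.left m ≠ Lay.right m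

/-- Type A (`i < i' < j < j'`): the assignments `a = a_l`, `a' = a_{l'}`
(`true` = top `↑`, `false` = bottom `↓`, first component = left end) force a
crossing iff every admissible layout of the two lines on the common interval
(edges `i' ≤ m < j`) satisfying the periphery condition — the left end of `l'`
is outermost per `a'.1`, and the right end of `l` is outermost per `a.2` —
crosses. -/
def ForcedCrossingA (i j i' j' : ℤ) (a a' : Bool × Bool) : Prop :=
  ∀ Lay : TwoLineLayout i' j,
    Lay.left i' = !a'.1 → Lay.right (j - 1) = a.2 → Lay.Crosses

lemma forced_iff (i j i' j' : ℤ) (h2 : i' < j) (a a' : Bool × Bool) :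
    ForcedCrossingA i j i' j' a a' ↔ a.2 = a'.1 := by
  constructor
  · intro hF
    by_contra hne
    have hne' : a.2 = !a'.1 := by
      cases h : a'.1 <;> cases h2 : a.2 <;> simp_all
    have := hF ⟨fun _ => !a'.1, fun _ => !a'.1, fun _ _ _ => rfl⟩ rfl hne'.symm
    obtain ⟨m, _, _, hm⟩ := this
    exact hm rfl
  · intro heq Lay hl hr
    by_contra hnc
    unfold TwoLineLayout.Crosses at hnc
    push_neg at hnc
    have key : ∀ m : ℤ, i' ≤ m → m < j → Lay.left i' = Lay.left m := by
      refine fun m hm => Int.le_induction (motive := fun n _ => n < j → Lay.left i' = Lay.left n) ?_ ?_ m hm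
      · intro _; rfl
      · intro n hn ih hlt
        have hn' : n < j := by omega
        have h1 : Lay.left i' = Lay.left n := ih hn'
        have h2' : Lay.left n = Lay.right n := hnc n hn hn'
        have h3' : Lay.right n = Lay.left (n + 1) := by
          have := Lay.admissible (n + 1) (by omega) hlt
          simpa using this
        rw [h1, h2', h3']
    have h4 : Lay.left (j - 1) = Lay.right (j - 1) := hnc (j - 1) (by omega) (by omega)
    have h5 : Lay.left i' = Lay.left (j - 1) := key (j - 1) (by omega) (by omega)
    rw [hl, h4, hr, heq] at h5
    simp at h5

/-- characterization of forced crossings for type-A pairs, and the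
fact that the right-end assignment of `l'` is irrelevant. -/
theorem stmt_1 (i j i' j' : ℤ) (h1 : i < i') (h2 : i' < j) (h3 : j < j')
    (a a' : Bool × Bool) :
    (ForcedCrossingA i j i' j' a a' ↔
      (a = (true, true) ∧ a'.1 = true) ∨
      (a = (true, false) ∧ a'.1 = false) ∨
      (a = (false, true) ∧ a'.1 = true) ∨
      (a = (false, false) ∧ a'.1 = false)) ∧
    (∀ y y' : Bool,
      ForcedCrossingA i j i' j' a (a'.1, y) ↔ ForcedCrossingA i j i' j' a (a'.1, y')) := by
  constructor
  · rw [forced_iff i j i' j' h2]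
    obtain ⟨x, z⟩ := a
    cases x <;> cases z <;> cases h : a'.1 <;> simp_all
  · intro y y'
    rw [forced_iff i j i' j' h2, forced_iff i j i' j' h2]
end

section
/- Let l=[i,j] and l'=[i',j] with i'<i (type C_r, common right endpoint j). With endpoint assignments, the lines force a crossing if and only if the two ends of l are assigned to opposite sides and the right end of l' is assigned to the same side as the left end of l. -/
/-- Type C_r (`l = [i,j]`, `l' = [i',j]` with `i' < i`, common right endpoint `j`):
the assignments force a crossing iff every admissible layout on the common interval
(edges `i ≤ m < j`) crosses, where: near `i` the left end of `l` lies on the side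
`a.1` (periphery among the passing line `l'`), and at the shared station `j` the
periphery condition only constrains the relative order of the two right ends when
they are assigned to different sides (`l` above `l'` iff `a.2 = ↑`). -/
def ForcedCrossingCr (i j i' : ℤ) (a a' : Bool × Bool) : Prop :=
  ∀ Lay : TwoLineLayout i j,
    Lay.left i = a.1 → (a.2 ≠ a'.2 → Lay.right (j - 1) = a.2) → Lay.Crosses

/-- If a layout never crosses, its `right` value on any common edge equals
`left lo`. -/
lemma no_cross_const {lo hi : ℤ} (Lay : TwoLineLayout lo hi)
    (hnc : ∀ m : ℤ, lo ≤ m → m < hi → Lay.left m = Lay.right m) :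
    ∀ m : ℤ, lo ≤ m → m < hi → Lay.right m = Lay.left lo := by
  intro m hm
  refine Int.le_induction (motive := fun m _ => m < hi → Lay.right m = Lay.left lo)
    (fun h => (hnc lo le_rfl h).symm) (fun n hn ih h => ?_) m hm
  have h1 : Lay.right n = Lay.left lo := ih (by omega)
  have h2 : Lay.right ((n + 1) - 1) = Lay.left (n + 1) :=
    Lay.admissible (n + 1) (by omega) h
  have h3 : Lay.left (n + 1) = Lay.right (n + 1) := hnc (n + 1) (by omega) h
  simp only [add_sub_cancel_right] at h2
  rw [← h3, ← h2, h1]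

/-- a type-C_r pair forces a crossing iff the two ends of `l` are
assigned to opposite sides and the right end of `l'` is assigned to the same side
as the left end of `l`. -/
theorem stmt_3 (i j i' : ℤ) (h1 : i' < i) (h2 : i < j) (a a' : Bool × Bool) :
    ForcedCrossingCr i j i' a a' ↔ (a.1 ≠ a.2 ∧ a'.2 = a.1) := by
  constructor
  · intro hF
    by_contra hcon
    -- use the constant layout at a.1
    have hcross := hF ⟨fun _ => a.1, fun _ => a.1, fun _ _ _ => rfl⟩ rfl
      (by
        intro hne
        by_contra h
        simp only at h
        -- h : ¬ a.1 = a.2, hne : a.2 ≠ a'.2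
        apply hcon
        constructor
        · exact fun he => h he
        · cases ha : a.2 <;> cases ha' : a'.2 <;> cases ha1 : a.1 <;>
            simp_all)
    obtain ⟨m, _, _, hne⟩ := hcross
    exact hne rfl
  · rintro ⟨hne, heq⟩ Lay hl hr
    by_contra hnc
    simp only [TwoLineLayout.Crosses, not_exists] at hnc
    have hnc' : ∀ m : ℤ, i ≤ m → m < j → Lay.left m = Lay.right m := by
      intro m hm hm'
      by_contra h
      exact hnc m ⟨hm, hm', h⟩
    have := no_cross_const Lay hnc' (j - 1) (by omega) (by omega)
    have h2' : a.2 ≠ a'.2 := fun h => hne (by rw [← heq, h])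
    rw [hr h2', hl] at this
    exact hne this.symm
end

section
/- Consider n lines that are pairwise of type A or I or C (i.e., every pair has a common subinterval), each with an assignment of both ends to {↑,↓}. Define the forced-crossing count as the number of pairs that force a crossing according to the type-A, type-C and type-I crossing characterizations. Then for any line l=[i,j], whether l forces a crossing with a line l'=[i',j'] having j'>j depends only on the assignment of both ends of l and the left-end assignment of l', not on the right-end assignment of l'. Consequently, fixing left-end assignments of all lines and then choosing each right-end assignment greedily in increasing order of right endpoints (choosing the side minimizing crossings with lines whose right endpoint is larger, considering only their left-end assignments) yields a right-end assignment minimizing the total forced-crossing count among all right-end assignments extending the given left-end assignments. -/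
/-- Forced-crossing indicator for a canonically ordered pair of overlapping lines
`l = [i,j]`, `l' = [i',j']` (with `j < j'`, or `j = j'` and `i' < i`), with end
assignments `a = a_l`, `a' = a_{l'}` (`true` = top `↑`):
* type D (`j ≤ i'`, no common edge): no crossing;
* type C_l (`i = i'`): crossing iff `a_l = (x, !x)` and `a_{l'} = (!x, *)`;
* type C_r (`j = j'`): crossing iff `a_l = (x, !x)` and the right end of `l'` is `x`;
* type I (`i' < i`): crossing iff the ends of the inner line `l` are opposite;
* type A (`i < i' < j < j'`): crossing iff `a_l = (*, y)` and `a_{l'} = (y, *)`. -/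
def fcross (l l' : ℤ × ℤ) (a a' : Bool × Bool) : Bool :=
  if l.2 ≤ l'.1 then false
  else if l.1 = l'.1 then (a.1 != a.2) && (a.2 == a'.1)
  else if l.2 = l'.2 then (a.1 != a.2) && (a'.2 == a.1)
  else if l'.1 < l.1 then a.1 != a.2
  else a.2 == a'.1

/-- Canonical order on a pair of lines: `l` has the smaller right end, ties broken
by the larger left end. -/
def canonPair (l l' : ℤ × ℤ) : Prop := l.2 < l'.2 ∨ (l.2 = l'.2 ∧ l'.1 < l.1)

instance (l l' : ℤ × ℤ) : Decidable (canonPair l l') := by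
  unfold canonPair; infer_instance

/-- Total forced-crossing count, over canonically ordered pairs of lines. -/
def totalCount (N : ℕ) (ln : Fin N → ℤ × ℤ) (a : Fin N → Bool × Bool) : ℕ :=
  ((Finset.univ ×ˢ Finset.univ).filter (fun pq : Fin N × Fin N =>
    canonPair (ln pq.1) (ln pq.2) ∧ fcross (ln pq.1) (ln pq.2) (a pq.1) (a pq.2) = true)).card

lemma fcross_indep {l l' : ℤ × ℤ} (h : l.2 ≠ l'.2) (a : Bool × Bool) (x y y' : Bool) :
    fcross l l' a (x, y) = fcross l l' a (x, y') := by
  simp only [fcross]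
  split_ifs <;> rfl

lemma core (lp lq lr : ℤ × ℤ) (hj : lp.2 = lq.2) (hiq : lq.1 < lp.1)
    (h2 : lr.1 < lp.2) (h3 : lp.2 < lr.2) (x μ c : Bool) :
    ((if fcross lp lr (x, x) (c, true) = true then 1 else 0) +
      (if fcross lq lr (μ, !x) (c, true) = true then 1 else 0) : ℕ) ≤
    (if fcross lp lr (x, !x) (c, true) = true then 1 else 0) +
      (if fcross lq lr (μ, x) (c, true) = true then 1 else 0) := by
  obtain ⟨ip, j⟩ := lp; obtain ⟨iq, j'⟩ := lq; obtain ⟨ir, jr⟩ := lr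
  simp only at hj hiq h2 h3
  subst hj
  have e1 : ¬ (j ≤ ir) := not_le.2 h2
  have e2 : ¬ (j = jr) := ne_of_lt h3
  simp only [fcross]
  rcases lt_trichotomy ir ip with h|h|h <;> rcases lt_trichotomy ir iq with h'|h'|h'
  · simp only [if_neg e1, if_neg e2, if_neg (by omega : ¬ ip = ir),
      if_neg (by omega : ¬ iq = ir), if_pos h, if_pos h']
    cases x <;> cases μ <;> cases c <;> decide
  · simp only [if_neg e1, if_neg e2, if_neg (by omega : ¬ ip = ir), if_pos h,
      if_pos (h'.symm : iq = ir)]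
    cases x <;> cases μ <;> cases c <;> decide
  · simp only [if_neg e1, if_neg e2, if_neg (by omega : ¬ ip = ir), if_pos h,
      if_neg (by omega : ¬ iq = ir), if_neg (by omega : ¬ ir < iq)]
    cases x <;> cases μ <;> cases c <;> decide
  · exfalso; omega
  · exfalso; omega
  · simp only [if_neg e1, if_neg e2, if_pos (h.symm : ip = ir),
      if_neg (by omega : ¬ iq = ir), if_neg (by omega : ¬ ir < iq)]
    cases x <;> cases μ <;> cases c <;> decide
  · exfalso; omega
  · exfalso; omega
  · simp only [if_neg e1, if_neg e2, if_neg (by omega : ¬ ip = ir),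
      if_neg (by omega : ¬ ir < ip), if_neg (by omega : ¬ iq = ir),
      if_neg (by omega : ¬ ir < iq)]
    cases x <;> cases μ <;> cases c <;> decide

lemma ite_or_split {P Q R : Prop} [Decidable P] [Decidable Q] [Decidable R] (h : ¬(P ∧ Q)) :
    (if (P ∨ Q) ∧ R then (1:ℕ) else 0) =
      (if P ∧ R then 1 else 0) + (if Q ∧ R then 1 else 0) := by
  by_cases hP : P <;> by_cases hQ : Q <;> by_cases hR : R <;> simp_all

/-- for pairwise-overlapping lines with fixed left-end assignments,
(1) whether `l` forces a crossing with a line `l'` having strictly larger right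
endpoint depends only on both ends of `l` and the left end of `l'`; consequently
(2) choosing each right end greedily — minimizing the forced crossings with lines
of strictly larger right endpoint, only their left-end assignments being relevant,
ties broken by top — minimizes the total forced-crossing count among all right-end
assignments extending the given left-end assignments. -/
theorem stmt_4 (N : ℕ) (ln : Fin N → ℤ × ℤ) (hinj : Function.Injective ln)
    (hval : ∀ p, (ln p).1 < (ln p).2)
    (hover : ∀ p q : Fin N, p ≠ q → (ln p).1 < (ln q).2 ∧ (ln q).1 < (ln p).2)
    (La Ra : Fin N → Bool)
    (hgreedy : ∀ p : Fin N, Ra p = decide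
      ((Finset.univ.filter (fun q : Fin N => (ln p).2 < (ln q).2 ∧
          fcross (ln p) (ln q) (La p, true) (La q, true) = true)).card ≤
       (Finset.univ.filter (fun q : Fin N => (ln p).2 < (ln q).2 ∧
          fcross (ln p) (ln q) (La p, false) (La q, true) = true)).card)) :
    (∀ p q : Fin N, (ln p).2 < (ln q).2 → ∀ y y' : Bool,
      fcross (ln p) (ln q) (La p, Ra p) (La q, y) =
      fcross (ln p) (ln q) (La p, Ra p) (La q, y')) ∧
    (∀ Ra' : Fin N → Bool,
      totalCount N ln (fun p => (La p, Ra p)) ≤ totalCount N ln (fun p => (La p, Ra' p))) := by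
  classical
  refine ⟨fun p q h y y' => fcross_indep (ne_of_lt h) _ _ _ _, ?_⟩
  intro Ra'
  set c : Fin N → Bool → ℕ := fun p b =>
    (Finset.univ.filter (fun q : Fin N => (ln p).2 < (ln q).2 ∧
      fcross (ln p) (ln q) (La p, b) (La q, true) = true)).card with hc
  have csum : ∀ p b, c p b = ∑ q : Fin N,
      (if (ln p).2 < (ln q).2 ∧ fcross (ln p) (ln q) (La p, b) (La q, true) = true
        then 1 else 0) := by
    intro p b
    rw [hc]
    exact Finset.card_filter _ _
  -- exchange inequality for equal-right-endpoint pairs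
  have main : ∀ p q : Fin N, (ln p).2 = (ln q).2 → (ln q).1 < (ln p).1 →
      c p (La p) + c q (!(La p)) ≤ c p (!(La p)) + c q (La p) := by
    intro p q hj hi
    rw [csum, csum, csum, csum, ← Finset.sum_add_distrib, ← Finset.sum_add_distrib]
    apply Finset.sum_le_sum
    intro r _
    by_cases hjr : (ln p).2 < (ln r).2
    · have hrp : p ≠ r := fun h => by rw [h] at hjr; exact lt_irrefl _ hjr
      have hrq : q ≠ r := fun h => by rw [← h, hj] at hjr; exact lt_irrefl _ hjr
      have h1 : (ln r).1 < (ln p).2 := (hover p r hrp).2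
      have hjq : (ln q).2 < (ln r).2 := hj ▸ hjr
      simp only [and_iff_right hjr, and_iff_right hjq]
      exact core (ln p) (ln q) (ln r) hj hi h1 hjr (La p) (La q) (La r)
    · have hjq : ¬ (ln q).2 < (ln r).2 := by rw [← hj]; exact hjr
      simp [hjr, hjq]
  -- greedy minimizes c p pointwise
  have copt : ∀ p b, c p (Ra p) ≤ c p b := by
    intro p b
    have h := hgreedy p
    rcases le_or_gt (c p true) (c p false) with h1 | h1
    · have hr : Ra p = true := by rw [h, decide_eq_true_eq]; exact h1
      rw [hr]; cases b
      · exact h1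
      · exact le_refl _
    · have hr : Ra p = false := by rw [h, decide_eq_false_iff_not]; exact not_le.2 h1
      rw [hr]; cases b
      · exact le_refl _
      · exact h1.le
  -- greedy never crosses equal-right-endpoint pairs
  have nocross : ∀ p q : Fin N, (ln p).2 = (ln q).2 → (ln q).1 < (ln p).1 →
      ¬ (fcross (ln p) (ln q) (La p, Ra p) (La q, Ra q) = true) := by
    intro p q hj hi hcon
    have hiq : (ln q).1 < (ln p).2 := lt_trans hi (hval p)
    have hne : ¬ (ln p).1 = (ln q).1 := ne_of_gt hi
    rw [fcross, if_neg (not_le.2 hiq), if_neg hne, if_pos hj] at hcon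
    simp only [Bool.and_eq_true, bne_iff_ne, ne_eq, beq_iff_eq] at hcon
    obtain ⟨h1, h2⟩ := hcon
    have hRp : Ra p = !(La p) := by
      cases hLp : La p <;> cases hRp2 : Ra p <;> simp [hLp, hRp2] at h1 ⊢
    have hRq : Ra q = La p := h2
    have hM := main p q hj hi
    have hp : Ra p = decide (c p true ≤ c p false) := hgreedy p
    have hq : Ra q = decide (c q true ≤ c q false) := hgreedy q
    rw [hRp] at hp
    rw [hRq] at hq
    cases hx : La p
    · rw [hx] at hp hq hM
      simp only [Bool.not_false] at hp hM
      have e1 : c p true ≤ c p false := of_decide_eq_true hp.symm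
      have e2 : ¬ (c q true ≤ c q false) := of_decide_eq_false hq.symm
      omega
    · rw [hx] at hp hq hM
      simp only [Bool.not_true] at hp hM
      have e1 : ¬ (c p true ≤ c p false) := of_decide_eq_false hp.symm
      have e2 : c q true ≤ c q false := of_decide_eq_true hq.symm
      omega
  -- decomposition of the total count
  have Trep : ∀ R : Fin N → Bool, totalCount N ln (fun p => (La p, R p)) =
      ∑ p : Fin N, ∑ q : Fin N,
        ((if (ln p).2 < (ln q).2 ∧
            fcross (ln p) (ln q) (La p, R p) (La q, R q) = true then 1 else 0) +
         (if ((ln p).2 = (ln q).2 ∧ (ln q).1 < (ln p).1) ∧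
            fcross (ln p) (ln q) (La p, R p) (La q, R q) = true then 1 else 0)) := by
    intro R
    rw [totalCount, Finset.card_filter, Finset.sum_product]
    refine Finset.sum_congr rfl fun p _ => Finset.sum_congr rfl fun q _ => ?_
    simp only [canonPair]
    exact ite_or_split (by rintro ⟨h1, h2, -⟩; exact absurd h2 (ne_of_lt h1))
  have sum1 : ∀ (R : Fin N → Bool) (p : Fin N),
      (∑ q : Fin N, (if (ln p).2 < (ln q).2 ∧
          fcross (ln p) (ln q) (La p, R p) (La q, R q) = true then 1 else 0)) = c p (R p) := by
    intro R p
    rw [csum]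
    refine Finset.sum_congr rfl fun q _ => ?_
    by_cases h : (ln p).2 < (ln q).2
    · rw [fcross_indep (ne_of_lt h) (La p, R p) (La q) (R q) true]
    · simp [h]
  rw [Trep Ra, Trep Ra']
  calc ∑ p : Fin N, ∑ q : Fin N,
        ((if (ln p).2 < (ln q).2 ∧
            fcross (ln p) (ln q) (La p, Ra p) (La q, Ra q) = true then 1 else 0) +
         (if ((ln p).2 = (ln q).2 ∧ (ln q).1 < (ln p).1) ∧
            fcross (ln p) (ln q) (La p, Ra p) (La q, Ra q) = true then 1 else 0))
      = ∑ p : Fin N, c p (Ra p) := by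
        refine Finset.sum_congr rfl fun p _ => ?_
        rw [Finset.sum_add_distrib, sum1 Ra p]
        have : (∑ q : Fin N, (if ((ln p).2 = (ln q).2 ∧ (ln q).1 < (ln p).1) ∧
            fcross (ln p) (ln q) (La p, Ra p) (La q, Ra q) = true then 1 else 0)) = 0 := by
          refine Finset.sum_eq_zero fun q _ => ?_
          rw [if_neg]
          rintro ⟨⟨hj, hi⟩, hcr⟩
          exact nocross p q hj hi hcr
        rw [this, add_zero]
    _ ≤ ∑ p : Fin N, c p (Ra' p) := Finset.sum_le_sum fun p _ => copt p (Ra' p)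
    _ ≤ _ := by
        refine Finset.sum_le_sum fun p _ => ?_
        rw [← sum1 Ra' p]
        exact Finset.sum_le_sum fun q _ => Nat.le_add_right _ _
end

section
/- In any optimal layout for MLCM-P on a path there exist no crossings between two lines sharing a right endpoint, nor between two lines sharing a left endpoint (lines of type C_l and C_r do not cross in optimal layouts). Quantitatively: if l_1, l_2 share right endpoint at station i and cross in a layout where all crossings between a pair occur on the edge immediately left of the smaller right endpoint, then swapping the top/bottom assignments of the right ends of l_1 and l_2 reduces the number of crossings by at least 2|M|+|M_↑|+|M_↓|+1 ≥ 1, where M, M_↑, M_↓ count lines between l_1 and l_2 on edge (i−1,i) that respectively pass through station i, end at i assigned top, or end at i assigned bottom. -/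
/-- Line `l = [l.1, l.2]` uses edge `(m, m+1)` of the path. -/
def Covers (l : ℤ × ℤ) (m : ℤ) : Prop := l.1 ≤ m ∧ m + 1 ≤ l.2

instance (l : ℤ × ℤ) (m : ℤ) : Decidable (Covers l m) := by
  unfold Covers; infer_instance

/-- An admissible layout of the lines `L` on the path, satisfying the periphery
condition: heights `hl m`, `hr m` of the lines at the left and right end of each
edge `(m, m+1)`; distinct heights per edge end; no crossings inside stations;
each line end outermost (topmost or bottommost) at its terminal station among
the lines passing through. -/
structure PathLayout (L : Finset (ℤ × ℤ)) where
  hl : ℤ → ℤ × ℤ → ℝ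
  hr : ℤ → ℤ × ℤ → ℝ
  injL : ∀ m : ℤ, ∀ l ∈ L, ∀ l' ∈ L, Covers l m → Covers l' m → hl m l = hl m l' → l = l'
  injR : ∀ m : ℤ, ∀ l ∈ L, ∀ l' ∈ L, Covers l m → Covers l' m → hr m l = hr m l' → l = l'
  admissible : ∀ m : ℤ, ∀ l ∈ L, ∀ l' ∈ L,
    Covers l m → Covers l (m + 1) → Covers l' m → Covers l' (m + 1) →
    (hr m l < hr m l' ↔ hl (m + 1) l < hl (m + 1) l')
  periphL : ∀ l ∈ L,
    (∀ l' ∈ L, l' ≠ l → Covers l' l.1 → l'.1 < l.1 → hl l.1 l' < hl l.1 l) ∨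
    (∀ l' ∈ L, l' ≠ l → Covers l' l.1 → l'.1 < l.1 → hl l.1 l < hl l.1 l')
  periphR : ∀ l ∈ L,
    (∀ l' ∈ L, l' ≠ l → Covers l' (l.2 - 1) → l.2 < l'.2 → hr (l.2 - 1) l' < hr (l.2 - 1) l) ∨
    (∀ l' ∈ L, l' ≠ l → Covers l' (l.2 - 1) → l.2 < l'.2 → hr (l.2 - 1) l < hr (l.2 - 1) l')

/-- Number of crossings of a layout: on each edge, the number of pairs of lines
whose vertical order differs at the two ends of the edge. -/
noncomputable def crossCount (n : ℕ) (L : Finset (ℤ × ℤ)) (Λ : PathLayout L) : ℕ :=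
  ∑ m ∈ Finset.Icc (1 : ℤ) ((n : ℤ) - 1),
    ((L ×ˢ L).filter (fun p : (ℤ × ℤ) × (ℤ × ℤ) => Covers p.1 m ∧ Covers p.2 m ∧
      Λ.hl m p.1 < Λ.hl m p.2 ∧ Λ.hr m p.2 < Λ.hr m p.1)).card







/-- swap of two lines -/
def sw (l₁ l₂ l : ℤ × ℤ) : ℤ × ℤ := if l = l₁ then l₂ else if l = l₂ then l₁ else l

lemma sw_invol (l₁ l₂ l : ℤ × ℤ) : sw l₁ l₂ (sw l₁ l₂ l) = l := by
  unfold sw; split_ifs <;> simp_all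

lemma sw_a (l₁ l₂ : ℤ × ℤ) : sw l₁ l₂ l₁ = l₂ := by simp [sw]

lemma sw_b (l₁ l₂ : ℤ × ℤ) (h : l₁ ≠ l₂) : sw l₁ l₂ l₂ = l₁ := by
  simp [sw, h.symm]

lemma sw_id (l₁ l₂ l : ℤ × ℤ) (h1 : l ≠ l₁) (h2 : l ≠ l₂) : sw l₁ l₂ l = l := by
  simp [sw, h1, h2]

lemma sw_inj (l₁ l₂ : ℤ × ℤ) {l l' : ℤ × ℤ} (h : sw l₁ l₂ l = sw l₁ l₂ l') : l = l' := by
  rw [← sw_invol l₁ l₂ l, h, sw_invol]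

lemma covers_iff (l : ℤ × ℤ) (m : ℤ) : Covers l m ↔ l.1 ≤ m ∧ m + 1 ≤ l.2 := Iff.rfl

lemma card_lt_core (L : Finset (ℤ × ℤ)) (P : ℤ × ℤ → Prop) [DecidablePred P]
    (u v : ℤ × ℤ → ℝ) (l₁ l₂ : ℤ × ℤ) (h₁ : l₁ ∈ L) (h₂ : l₂ ∈ L) (hne : l₁ ≠ l₂)
    (hP₁ : P l₁) (hP₂ : P l₂) (hu : u l₁ < u l₂) (hv : v l₂ < v l₁) :
    ((L ×ˢ L).filter (fun p => P p.1 ∧ P p.2 ∧ u p.1 < u p.2 ∧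
        v (sw l₁ l₂ p.2) < v (sw l₁ l₂ p.1))).card <
    ((L ×ˢ L).filter (fun p => P p.1 ∧ P p.2 ∧ u p.1 < u p.2 ∧ v p.2 < v p.1)).card := by
  set S' := (L ×ˢ L).filter (fun p => P p.1 ∧ P p.2 ∧ u p.1 < u p.2 ∧
        v (sw l₁ l₂ p.2) < v (sw l₁ l₂ p.1)) with hS'def
  set S := (L ×ˢ L).filter (fun p => P p.1 ∧ P p.2 ∧ u p.1 < u p.2 ∧ v p.2 < v p.1) with hSdef
  have memS : ∀ p : (ℤ × ℤ) × (ℤ × ℤ), p ∈ S ↔ p.1 ∈ L ∧ p.2 ∈ L ∧ P p.1 ∧ P p.2 ∧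
      u p.1 < u p.2 ∧ v p.2 < v p.1 := by
    intro p
    simp [hSdef, Finset.mem_filter, Finset.mem_product, and_assoc]
  have memS' : ∀ p : (ℤ × ℤ) × (ℤ × ℤ), p ∈ S' ↔ p.1 ∈ L ∧ p.2 ∈ L ∧ P p.1 ∧ P p.2 ∧
      u p.1 < u p.2 ∧ v (sw l₁ l₂ p.2) < v (sw l₁ l₂ p.1) := by
    intro p
    simp [hS'def, Finset.mem_filter, Finset.mem_product, and_assoc]
  have hS12 : (l₁, l₂) ∈ S := (memS _).mpr ⟨h₁, h₂, hP₁, hP₂, hu, hv⟩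
  have hnS'12 : (l₁, l₂) ∉ S' := by
    intro h
    have := ((memS' _).mp h).2.2.2.2.2
    rw [sw_a, sw_b _ _ hne] at this
    exact absurd this (not_lt.mpr (le_of_lt hv))
  -- shape of elements of S' \ S
  have shape : ∀ p : (ℤ × ℤ) × (ℤ × ℤ), p ∈ S' → p ∉ S →
      (p.1 = l₂ ∧ p.2 ≠ l₁ ∧ p.2 ≠ l₂) ∨ (p.2 = l₁ ∧ p.1 ≠ l₁ ∧ p.1 ≠ l₂) := by
    intro p hp hq
    obtain ⟨m1, m2, P1, P2, hu', hv'⟩ := (memS' _).mp hp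
    have hq' : ¬ v p.2 < v p.1 := fun h => hq ((memS _).mpr ⟨m1, m2, P1, P2, hu', h⟩)
    rcases eq_or_ne p.1 l₁ with e1 | e1
    · rcases eq_or_ne p.2 l₁ with e2 | e2
      · rw [e1, e2] at hu'; exact absurd hu' (lt_irrefl _)
      rcases eq_or_ne p.2 l₂ with e3 | e3
      · rw [e1, e3, sw_a, sw_b _ _ hne] at hv'; linarith
      · rw [e1, sw_a, sw_id _ _ _ e2 e3] at hv'
        rw [e1] at hq' ⊢
        exact absurd (lt_trans hv' hv) hq'
    rcases eq_or_ne p.1 l₂ with e1' | e1'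
    · rcases eq_or_ne p.2 l₁ with e2 | e2
      · rw [e1', e2] at hu'; linarith
      rcases eq_or_ne p.2 l₂ with e3 | e3
      · rw [e1', e3] at hu'; exact absurd hu' (lt_irrefl _)
      · exact Or.inl ⟨e1', e2, e3⟩
    · rcases eq_or_ne p.2 l₁ with e2 | e2
      · exact Or.inr ⟨e2, e1, e1'⟩
      rcases eq_or_ne p.2 l₂ with e3 | e3
      · rw [e3, sw_b _ _ hne, sw_id _ _ _ e1 e1'] at hv'
        rw [e3] at hq'
        exact absurd (lt_trans hv hv') hq'
      · rw [sw_id _ _ _ e2 e3, sw_id _ _ _ e1 e1'] at hv'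
        exact absurd hv' hq'
  -- the injection
  classical
  set f : (ℤ × ℤ) × (ℤ × ℤ) → (ℤ × ℤ) × (ℤ × ℤ) :=
    fun p => if p ∈ S then p else (sw l₁ l₂ p.1, sw l₁ l₂ p.2) with hfdef
  have mapsTo : ∀ p ∈ S', f p ∈ S.erase (l₁, l₂) := by
    intro p hp
    by_cases hmem : p ∈ S
    · rw [hfdef]; simp only [if_pos hmem]
      refine Finset.mem_erase.mpr ⟨?_, hmem⟩
      intro h; rw [h] at hp; exact hnS'12 hp
    · rw [hfdef]; simp only [if_neg hmem]
      obtain ⟨m1, m2, P1, P2, hu', hv'⟩ := (memS' _).mp hp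
      rcases shape p hp hmem with ⟨e1, n1, n2⟩ | ⟨e2, n1, n2⟩
      · rw [e1] at hu' m1 P1
        rw [e1, sw_b _ _ hne, sw_id _ _ _ n1 n2] at hv'
        rw [e1, sw_b _ _ hne, sw_id _ _ _ n1 n2]
        refine Finset.mem_erase.mpr ⟨?_, (memS _).mpr ⟨h₁, m2, hP₁, P2, lt_trans hu hu', hv'⟩⟩
        intro h
        exact n2 (congrArg Prod.snd h)
      · rw [e2] at hu' m2 P2
        rw [e2, sw_a, sw_id _ _ _ n1 n2] at hv'
        rw [e2, sw_a, sw_id _ _ _ n1 n2]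
        refine Finset.mem_erase.mpr ⟨?_, (memS _).mpr ⟨m1, h₂, P1, hP₂, lt_trans hu' hu, hv'⟩⟩
        intro h
        exact n1 (congrArg Prod.fst h)
  have mix : ∀ p q : (ℤ × ℤ) × (ℤ × ℤ), p ∈ S' → q ∈ S' → q ∉ S →
      p = (sw l₁ l₂ q.1, sw l₁ l₂ q.2) → False := by
    intro p q hp hq hqS hpq
    obtain ⟨m1, m2, P1, P2, hu', hv'⟩ := (memS' _).mp hq
    rcases shape q hq hqS with ⟨e1, n1, n2⟩ | ⟨e2, n1, n2⟩
    · -- q = (l₂, c), p = (l₁, c)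
      have hpv := ((memS' _).mp hp).2.2.2.2.2
      rw [hpq] at hpv
      simp only at hpv
      rw [e1, sw_b _ _ hne, sw_a, sw_id _ _ _ n1 n2, sw_id _ _ _ n1 n2] at hpv
      -- hpv : v q.2 < v l₂
      exact hqS ((memS _).mpr ⟨m1, m2, P1, P2, hu', by rw [e1]; exact hpv⟩)
    · -- q = (c, l₁), p = (c, l₂)
      have hpv := ((memS' _).mp hp).2.2.2.2.2
      rw [hpq] at hpv
      simp only at hpv
      rw [e2, sw_a, sw_b _ _ hne, sw_id _ _ _ n1 n2, sw_id _ _ _ n1 n2] at hpv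
      -- hpv : v l₁ < v q.1
      exact hqS ((memS _).mpr ⟨m1, m2, P1, P2, hu', by rw [e2]; exact hpv⟩)
  have injOn : Set.InjOn f S' := by
    intro p hp q hq hfq
    simp only [Finset.mem_coe] at hp hq
    by_cases hpS : p ∈ S <;> by_cases hqS : q ∈ S
    · rw [hfdef] at hfq; simpa [if_pos hpS, if_pos hqS] using hfq
    · exfalso
      rw [hfdef] at hfq; simp only [if_pos hpS, if_neg hqS] at hfq
      exact mix p q hp hq hqS hfq
    · exfalso
      rw [hfdef] at hfq; simp only [if_neg hpS, if_pos hqS] at hfq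
      exact mix q p hq hp hpS hfq.symm
    · rw [hfdef] at hfq; simp only [if_neg hpS, if_neg hqS] at hfq
      have h1 : sw l₁ l₂ p.1 = sw l₁ l₂ q.1 := congrArg Prod.fst hfq
      have h2 : sw l₁ l₂ p.2 = sw l₁ l₂ q.2 := congrArg Prod.snd hfq
      exact Prod.ext (sw_inj _ _ h1) (sw_inj _ _ h2)
  calc S'.card ≤ (S.erase (l₁, l₂)).card := Finset.card_le_card_of_injOn f mapsTo injOn
    _ < S.card := Finset.card_erase_lt_of_mem hS12

lemma exists_better_right (n : ℕ) (L : Finset (ℤ × ℤ))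
    (hL : ∀ p ∈ L, 1 ≤ p.1 ∧ p.1 < p.2 ∧ p.2 ≤ (n : ℤ))
    (Λ : PathLayout L) (l₁ l₂ : ℤ × ℤ) (h₁ : l₁ ∈ L) (h₂ : l₂ ∈ L)
    (hne : l₁ ≠ l₂) (hsnd : l₁.2 = l₂.2) (m : ℤ)
    (hc₁ : Covers l₁ m) (hc₂ : Covers l₂ m)
    (hlm : Λ.hl m l₁ < Λ.hl m l₂) (hrm : Λ.hr m l₂ < Λ.hr m l₁) :
    ∃ Λ' : PathLayout L, crossCount n L Λ' < crossCount n L Λ := by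
  obtain ⟨ha₁, hb₁⟩ := (covers_iff _ _).mp hc₁
  obtain ⟨ha₂, hb₂⟩ := (covers_iff _ _).mp hc₂
  have σmem : ∀ l ∈ L, sw l₁ l₂ l ∈ L := by
    intro l hl; unfold sw; split_ifs <;> assumption
  have σsnd : ∀ l, (sw l₁ l₂ l).2 = l.2 := by
    intro l; unfold sw; split_ifs with h h' <;> simp_all
  have σcov : ∀ (l : ℤ × ℤ) (e : ℤ), m ≤ e → (Covers (sw l₁ l₂ l) e ↔ Covers l e) := by
    intro l e he
    unfold sw
    split_ifs with h h' <;> subst_vars <;> simp only [Covers] <;> constructor <;>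
      intro hx <;> omega
  refine ⟨⟨fun e l => if m + 1 ≤ e ∧ e + 1 ≤ l₁.2 then Λ.hl e (sw l₁ l₂ l) else Λ.hl e l,
          fun e l => if m ≤ e ∧ e + 1 ≤ l₁.2 then Λ.hr e (sw l₁ l₂ l) else Λ.hr e l,
          ?_, ?_, ?_, ?_, ?_⟩, ?_⟩
  · -- injL
    intro e l hl l' hl' hcov hcov' heq
    by_cases hcond : m + 1 ≤ e ∧ e + 1 ≤ l₁.2
    · rw [if_pos hcond, if_pos hcond] at heq
      exact sw_inj l₁ l₂ (Λ.injL e _ (σmem _ hl) _ (σmem _ hl')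
        ((σcov _ e (by omega)).mpr hcov) ((σcov _ e (by omega)).mpr hcov') heq)
    · simp only [if_neg hcond] at heq
      exact Λ.injL e _ hl _ hl' hcov hcov' heq
  · -- injR
    intro e l hl l' hl' hcov hcov' heq
    by_cases hcond : m ≤ e ∧ e + 1 ≤ l₁.2
    · rw [if_pos hcond, if_pos hcond] at heq
      exact sw_inj l₁ l₂ (Λ.injR e _ (σmem _ hl) _ (σmem _ hl')
        ((σcov _ e hcond.1).mpr hcov) ((σcov _ e hcond.1).mpr hcov') heq)
    · simp only [if_neg hcond] at heq
      exact Λ.injR e _ hl _ hl' hcov hcov' heq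
  · -- admissible
    intro e l hl l' hl' hc1 hc2 hc3 hc4
    have g2 := (covers_iff _ _).mp hc2
    have g4 := (covers_iff _ _).mp hc4
    by_cases hm : m ≤ e
    · by_cases hi : e + 1 + 1 ≤ l₁.2
      · have cR : m ≤ e ∧ e + 1 ≤ l₁.2 := ⟨hm, by omega⟩
        have cL : m + 1 ≤ e + 1 ∧ e + 1 + 1 ≤ l₁.2 := ⟨by omega, hi⟩
        simp only [if_pos cR, if_pos cL]
        exact Λ.admissible e _ (σmem _ hl) _ (σmem _ hl')
          ((σcov _ e hm).mpr hc1) ((σcov _ (e + 1) (by omega)).mpr hc2)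
          ((σcov _ e hm).mpr hc3) ((σcov _ (e + 1) (by omega)).mpr hc4)
      · have cL : ¬(m + 1 ≤ e + 1 ∧ e + 1 + 1 ≤ l₁.2) := fun h => hi h.2
        simp only [if_neg cL]
        by_cases cR : m ≤ e ∧ e + 1 ≤ l₁.2
        · simp only [if_pos cR]
          have hl1 : l ≠ l₁ := by intro h; rw [h] at g2; exact hi g2.2
          have hl2 : l ≠ l₂ := by
            intro h; rw [h] at g2; exact hi (by have := g2.2; omega)
          have hl1' : l' ≠ l₁ := by intro h; rw [h] at g4; exact hi g4.2
          have hl2' : l' ≠ l₂ := by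
            intro h; rw [h] at g4; exact hi (by have := g4.2; omega)
          rw [sw_id _ _ _ hl1 hl2, sw_id _ _ _ hl1' hl2']
          exact Λ.admissible e _ hl _ hl' hc1 hc2 hc3 hc4
        · simp only [if_neg cR]
          exact Λ.admissible e _ hl _ hl' hc1 hc2 hc3 hc4
    · have cR : ¬(m ≤ e ∧ e + 1 ≤ l₁.2) := fun h => hm h.1
      have cL : ¬(m + 1 ≤ e + 1 ∧ e + 1 + 1 ≤ l₁.2) := fun h => hm (by omega)
      simp only [if_neg cR, if_neg cL]
      exact Λ.admissible e _ hl _ hl' hc1 hc2 hc3 hc4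
  · -- periphL
    intro l hl
    by_cases hcond : m + 1 ≤ l.1 ∧ l.1 + 1 ≤ l₁.2
    · have hne1 : l ≠ l₁ := by intro h; subst h; omega
      have hne2 : l ≠ l₂ := by intro h; subst h; omega
      have hswl : sw l₁ l₂ l = l := sw_id _ _ _ hne1 hne2
      have key : ∀ l' ∈ L, l' ≠ l → Covers l' l.1 → l'.1 < l.1 →
          sw l₁ l₂ l' ∈ L ∧ sw l₁ l₂ l' ≠ l ∧ Covers (sw l₁ l₂ l') l.1 ∧
          (sw l₁ l₂ l').1 < l.1 := by
        intro l' hl' hnel cov hlt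
        refine ⟨σmem _ hl', ?_, (σcov _ _ (by omega)).mpr cov, ?_⟩
        · intro h; exact hnel (by rw [← sw_invol l₁ l₂ l', h, hswl])
        · rcases eq_or_ne l' l₁ with rfl | e1
          · rw [sw_a]; omega
          rcases eq_or_ne l' l₂ with rfl | e2
          · rw [sw_b _ _ hne]; omega
          · rw [sw_id _ _ _ e1 e2]; exact hlt
      rcases Λ.periphL l hl with H | H
      · left; intro l' hl' hnel cov hlt
        simp only [if_pos hcond]; rw [hswl]
        obtain ⟨k1, k2, k3, k4⟩ := key l' hl' hnel cov hlt
        exact H _ k1 k2 k3 k4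
      · right; intro l' hl' hnel cov hlt
        simp only [if_pos hcond]; rw [hswl]
        obtain ⟨k1, k2, k3, k4⟩ := key l' hl' hnel cov hlt
        exact H _ k1 k2 k3 k4
    · rcases Λ.periphL l hl with H | H
      · left; intro l' hl' hnel cov hlt
        simp only [if_neg hcond]
        exact H _ hl' hnel cov hlt
      · right; intro l' hl' hnel cov hlt
        simp only [if_neg hcond]
        exact H _ hl' hnel cov hlt
  · -- periphR
    intro l hl
    by_cases hcond : m ≤ l.2 - 1 ∧ l.2 - 1 + 1 ≤ l₁.2
    · rcases eq_or_ne l l₁ with rfl | hne1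
      · -- l = l₁ : use periphR of l₂
        have hE : l₂.2 - 1 = l.2 - 1 := by omega
        rcases Λ.periphR l₂ h₂ with H | H
        · left; intro l' hl' hnel cov hlt
          simp only [if_pos hcond]; rw [sw_a]
          have n2 : l' ≠ l₂ := by intro h; subst h; omega
          rw [sw_id _ _ _ hnel n2]
          have := H l' hl' n2 (by rw [hE]; exact cov) (by omega)
          rw [hE] at this; exact this
        · right; intro l' hl' hnel cov hlt
          simp only [if_pos hcond]; rw [sw_a]
          have n2 : l' ≠ l₂ := by intro h; subst h; omega
          rw [sw_id _ _ _ hnel n2]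
          have := H l' hl' n2 (by rw [hE]; exact cov) (by omega)
          rw [hE] at this; exact this
      rcases eq_or_ne l l₂ with rfl | hne2
      · -- l = l₂ : use periphR of l₁
        have hE : l₁.2 - 1 = l.2 - 1 := by omega
        rcases Λ.periphR l₁ h₁ with H | H
        · left; intro l' hl' hnel cov hlt
          simp only [if_pos hcond]; rw [sw_b _ _ hne]
          have n1 : l' ≠ l₁ := by intro h; subst h; omega
          rw [sw_id _ _ _ n1 hnel]
          have := H l' hl' n1 (by rw [hE]; exact cov) (by omega)
          rw [hE] at this; exact this
        · right; intro l' hl' hnel cov hlt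
          simp only [if_pos hcond]; rw [sw_b _ _ hne]
          have n1 : l' ≠ l₁ := by intro h; subst h; omega
          rw [sw_id _ _ _ n1 hnel]
          have := H l' hl' n1 (by rw [hE]; exact cov) (by omega)
          rw [hE] at this; exact this
      · -- l not in the pair
        have hswl : sw l₁ l₂ l = l := sw_id _ _ _ hne1 hne2
        have key : ∀ l' ∈ L, l' ≠ l → Covers l' (l.2 - 1) → l.2 < l'.2 →
            sw l₁ l₂ l' ∈ L ∧ sw l₁ l₂ l' ≠ l ∧ Covers (sw l₁ l₂ l') (l.2 - 1) ∧
            l.2 < (sw l₁ l₂ l').2 := by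
          intro l' hl' hnel cov hlt
          refine ⟨σmem _ hl', ?_, (σcov _ _ hcond.1).mpr cov, by rw [σsnd]; exact hlt⟩
          intro h; exact hnel (by rw [← sw_invol l₁ l₂ l', h, hswl])
        rcases Λ.periphR l hl with H | H
        · left; intro l' hl' hnel cov hlt
          simp only [if_pos hcond]; rw [hswl]
          obtain ⟨k1, k2, k3, k4⟩ := key l' hl' hnel cov hlt
          exact H _ k1 k2 k3 k4
        · right; intro l' hl' hnel cov hlt
          simp only [if_pos hcond]; rw [hswl]
          obtain ⟨k1, k2, k3, k4⟩ := key l' hl' hnel cov hlt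
          exact H _ k1 k2 k3 k4
    · rcases Λ.periphR l hl with H | H
      · left; intro l' hl' hnel cov hlt
        simp only [if_neg hcond]
        exact H _ hl' hnel cov hlt
      · right; intro l' hl' hnel cov hlt
        simp only [if_neg hcond]
        exact H _ hl' hnel cov hlt
  · -- the crossing count decreases
    unfold crossCount
    dsimp only
    apply Finset.sum_lt_sum
    · intro e he
      by_cases hcond : m ≤ e ∧ e + 1 ≤ l₁.2
      · by_cases hme : m + 1 ≤ e
        · -- both ends swapped: equal cardinality
          apply le_of_eq
          have c1 : m + 1 ≤ e ∧ e + 1 ≤ l₁.2 := ⟨hme, hcond.2⟩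
          simp only [if_pos hcond, if_pos c1]
          apply Finset.card_nbij' (fun p => (sw l₁ l₂ p.1, sw l₁ l₂ p.2))
            (fun p => (sw l₁ l₂ p.1, sw l₁ l₂ p.2))
          · intro p hp
            simp only [Finset.mem_coe, Finset.mem_filter, Finset.mem_product] at hp ⊢
            obtain ⟨⟨pm1, pm2⟩, c1', c2', h3, h4⟩ := hp
            exact ⟨⟨σmem _ pm1, σmem _ pm2⟩, (σcov _ e hcond.1).mpr c1',
              (σcov _ e hcond.1).mpr c2', h3, h4⟩
          · intro p hp
            simp only [Finset.mem_coe, Finset.mem_filter, Finset.mem_product] at hp ⊢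
            obtain ⟨⟨pm1, pm2⟩, c1', c2', h3, h4⟩ := hp
            refine ⟨⟨σmem _ pm1, σmem _ pm2⟩, (σcov _ e hcond.1).mpr c1',
              (σcov _ e hcond.1).mpr c2', ?_, ?_⟩
            · rw [sw_invol, sw_invol]; exact h3
            · rw [sw_invol, sw_invol]; exact h4
          · intro p _; dsimp only; rw [sw_invol, sw_invol]
          · intro p _; dsimp only; rw [sw_invol, sw_invol]
        · -- e = m : strict decrease, used below as ≤
          have hem : e = m := by omega
          subst hem
          have cL : ¬(e + 1 ≤ e ∧ e + 1 ≤ l₁.2) := by omega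
          simp only [if_pos hcond, if_neg cL]
          exact le_of_lt (card_lt_core L (fun l => Covers l e) (Λ.hl e) (Λ.hr e)
            l₁ l₂ h₁ h₂ hne hc₁ hc₂ hlm hrm)
      · -- untouched edge
        apply le_of_eq
        have c1 : ¬(m + 1 ≤ e ∧ e + 1 ≤ l₁.2) := fun h => hcond ⟨by omega, h.2⟩
        simp only [if_pos, if_neg hcond, if_neg c1]
    · refine ⟨m, Finset.mem_Icc.mpr ⟨?_, ?_⟩, ?_⟩
      · have := (hL l₁ h₁).1; omega
      · have := (hL l₁ h₁).2.2; omega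
      · have cL : ¬(m + 1 ≤ m ∧ m + 1 ≤ l₁.2) := by omega
        have cR : m ≤ m ∧ m + 1 ≤ l₁.2 := ⟨le_refl m, hb₁⟩
        simp only [if_pos cR, if_neg cL]
        exact card_lt_core L (fun l => Covers l m) (Λ.hl m) (Λ.hr m)
          l₁ l₂ h₁ h₂ hne hc₁ hc₂ hlm hrm

lemma exists_better_left (n : ℕ) (L : Finset (ℤ × ℤ))
    (hL : ∀ p ∈ L, 1 ≤ p.1 ∧ p.1 < p.2 ∧ p.2 ≤ (n : ℤ))
    (Λ : PathLayout L) (l₁ l₂ : ℤ × ℤ) (h₁ : l₁ ∈ L) (h₂ : l₂ ∈ L)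
    (hne : l₁ ≠ l₂) (hfst : l₁.1 = l₂.1) (m : ℤ)
    (hc₁ : Covers l₁ m) (hc₂ : Covers l₂ m)
    (hlm : Λ.hl m l₁ < Λ.hl m l₂) (hrm : Λ.hr m l₂ < Λ.hr m l₁) :
    ∃ Λ' : PathLayout L, crossCount n L Λ' < crossCount n L Λ := by
  obtain ⟨ha₁, hb₁⟩ := (covers_iff _ _).mp hc₁
  obtain ⟨ha₂, hb₂⟩ := (covers_iff _ _).mp hc₂
  have σmem : ∀ l ∈ L, sw l₁ l₂ l ∈ L := by
    intro l hl; unfold sw; split_ifs <;> assumption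
  have σfst : ∀ l, (sw l₁ l₂ l).1 = l.1 := by
    intro l; unfold sw; split_ifs with h h' <;> simp_all
  have σcov : ∀ (l : ℤ × ℤ) (e : ℤ), e ≤ m → (Covers (sw l₁ l₂ l) e ↔ Covers l e) := by
    intro l e he
    unfold sw
    split_ifs with h h' <;> subst_vars <;> simp only [Covers] <;> constructor <;>
      intro hx <;> omega
  have main_lt : ((L ×ˢ L).filter (fun p : (ℤ × ℤ) × (ℤ × ℤ) => Covers p.1 m ∧ Covers p.2 m ∧
      Λ.hl m (sw l₁ l₂ p.1) < Λ.hl m (sw l₁ l₂ p.2) ∧ Λ.hr m p.2 < Λ.hr m p.1)).card <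
      ((L ×ˢ L).filter (fun p : (ℤ × ℤ) × (ℤ × ℤ) => Covers p.1 m ∧ Covers p.2 m ∧
      Λ.hl m p.1 < Λ.hl m p.2 ∧ Λ.hr m p.2 < Λ.hr m p.1)).card := by
    have e1 : ((L ×ˢ L).filter (fun p : (ℤ × ℤ) × (ℤ × ℤ) => Covers p.1 m ∧ Covers p.2 m ∧
        Λ.hl m (sw l₁ l₂ p.1) < Λ.hl m (sw l₁ l₂ p.2) ∧ Λ.hr m p.2 < Λ.hr m p.1)) =
        ((L ×ˢ L).filter (fun p : (ℤ × ℤ) × (ℤ × ℤ) => Covers p.1 m ∧ Covers p.2 m ∧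
        -Λ.hr m p.1 < -Λ.hr m p.2 ∧ -Λ.hl m (sw l₁ l₂ p.2) < -Λ.hl m (sw l₁ l₂ p.1))) := by
      apply Finset.filter_congr; intro p _
      constructor
      · rintro ⟨a, b, c, d⟩; exact ⟨a, b, neg_lt_neg d, neg_lt_neg c⟩
      · rintro ⟨a, b, c, d⟩; exact ⟨a, b, neg_lt_neg_iff.mp d, neg_lt_neg_iff.mp c⟩
    have e2 : ((L ×ˢ L).filter (fun p : (ℤ × ℤ) × (ℤ × ℤ) => Covers p.1 m ∧ Covers p.2 m ∧
        Λ.hl m p.1 < Λ.hl m p.2 ∧ Λ.hr m p.2 < Λ.hr m p.1)) =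
        ((L ×ˢ L).filter (fun p : (ℤ × ℤ) × (ℤ × ℤ) => Covers p.1 m ∧ Covers p.2 m ∧
        -Λ.hr m p.1 < -Λ.hr m p.2 ∧ -Λ.hl m p.2 < -Λ.hl m p.1)) := by
      apply Finset.filter_congr; intro p _
      constructor
      · rintro ⟨a, b, c, d⟩; exact ⟨a, b, neg_lt_neg d, neg_lt_neg c⟩
      · rintro ⟨a, b, c, d⟩; exact ⟨a, b, neg_lt_neg_iff.mp d, neg_lt_neg_iff.mp c⟩
    rw [e1, e2]
    exact card_lt_core L (fun l => Covers l m) (fun l => -Λ.hr m l) (fun l => -Λ.hl m l)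
      l₁ l₂ h₁ h₂ hne hc₁ hc₂ (neg_lt_neg hrm) (neg_lt_neg hlm)
  refine ⟨⟨fun e l => if l₁.1 ≤ e ∧ e ≤ m then Λ.hl e (sw l₁ l₂ l) else Λ.hl e l,
          fun e l => if l₁.1 ≤ e ∧ e + 1 ≤ m then Λ.hr e (sw l₁ l₂ l) else Λ.hr e l,
          ?_, ?_, ?_, ?_, ?_⟩, ?_⟩
  · -- injL
    intro e l hl l' hl' hcov hcov' heq
    by_cases hcond : l₁.1 ≤ e ∧ e ≤ m
    · rw [if_pos hcond, if_pos hcond] at heq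
      exact sw_inj l₁ l₂ (Λ.injL e _ (σmem _ hl) _ (σmem _ hl')
        ((σcov _ e hcond.2).mpr hcov) ((σcov _ e hcond.2).mpr hcov') heq)
    · rw [if_neg hcond, if_neg hcond] at heq
      exact Λ.injL e _ hl _ hl' hcov hcov' heq
  · -- injR
    intro e l hl l' hl' hcov hcov' heq
    by_cases hcond : l₁.1 ≤ e ∧ e + 1 ≤ m
    · rw [if_pos hcond, if_pos hcond] at heq
      exact sw_inj l₁ l₂ (Λ.injR e _ (σmem _ hl) _ (σmem _ hl')
        ((σcov _ e (by omega)).mpr hcov) ((σcov _ e (by omega)).mpr hcov') heq)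
    · rw [if_neg hcond, if_neg hcond] at heq
      exact Λ.injR e _ hl _ hl' hcov hcov' heq
  · -- admissible
    intro e l hl l' hl' hc1 hc2 hc3 hc4
    have g1 := (covers_iff _ _).mp hc1
    have g3 := (covers_iff _ _).mp hc3
    by_cases hm' : e + 1 ≤ m
    · by_cases hj : l₁.1 ≤ e
      · have cR : l₁.1 ≤ e ∧ e + 1 ≤ m := ⟨hj, hm'⟩
        have cL : l₁.1 ≤ e + 1 ∧ e + 1 ≤ m := ⟨by omega, hm'⟩
        simp only [if_pos cR, if_pos cL]
        exact Λ.admissible e _ (σmem _ hl) _ (σmem _ hl')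
          ((σcov _ e (by omega)).mpr hc1) ((σcov _ (e + 1) hm').mpr hc2)
          ((σcov _ e (by omega)).mpr hc3) ((σcov _ (e + 1) hm').mpr hc4)
      · have cR : ¬(l₁.1 ≤ e ∧ e + 1 ≤ m) := fun h => hj h.1
        simp only [if_neg cR]
        by_cases cL : l₁.1 ≤ e + 1 ∧ e + 1 ≤ m
        · simp only [if_pos cL]
          have hl1 : l ≠ l₁ := by intro h; rw [h] at g1; exact hj g1.1
          have hl2 : l ≠ l₂ := by
            intro h; rw [h] at g1; exact hj (by have := g1.1; omega)
          have hl1' : l' ≠ l₁ := by intro h; rw [h] at g3; exact hj g3.1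
          have hl2' : l' ≠ l₂ := by
            intro h; rw [h] at g3; exact hj (by have := g3.1; omega)
          rw [sw_id _ _ _ hl1 hl2, sw_id _ _ _ hl1' hl2']
          exact Λ.admissible e _ hl _ hl' hc1 hc2 hc3 hc4
        · simp only [if_neg cL]
          exact Λ.admissible e _ hl _ hl' hc1 hc2 hc3 hc4
    · have cR : ¬(l₁.1 ≤ e ∧ e + 1 ≤ m) := fun h => hm' h.2
      have cL : ¬(l₁.1 ≤ e + 1 ∧ e + 1 ≤ m) := fun h => hm' h.2
      simp only [if_neg cR, if_neg cL]
      exact Λ.admissible e _ hl _ hl' hc1 hc2 hc3 hc4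
  · -- periphL
    intro l hl
    by_cases hcond : l₁.1 ≤ l.1 ∧ l.1 ≤ m
    · rcases eq_or_ne l l₁ with rfl | hne1
      · -- l = l₁ : use periphL of l₂
        have hE : l₂.1 = l.1 := hfst.symm
        rcases Λ.periphL l₂ h₂ with H | H
        · left; intro l' hl' hnel cov hlt
          simp only [if_pos hcond]; rw [sw_a]
          have n2 : l' ≠ l₂ := by intro h; rw [h] at hlt; omega
          rw [sw_id _ _ _ hnel n2]
          have := H l' hl' n2 (by rw [hE]; exact cov) (by omega)
          rw [hE] at this; exact this
        · right; intro l' hl' hnel cov hlt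
          simp only [if_pos hcond]; rw [sw_a]
          have n2 : l' ≠ l₂ := by intro h; rw [h] at hlt; omega
          rw [sw_id _ _ _ hnel n2]
          have := H l' hl' n2 (by rw [hE]; exact cov) (by omega)
          rw [hE] at this; exact this
      rcases eq_or_ne l l₂ with rfl | hne2
      · -- l = l₂ : use periphL of l₁
        have hE : l₁.1 = l.1 := hfst
        rcases Λ.periphL l₁ h₁ with H | H
        · left; intro l' hl' hnel cov hlt
          simp only [if_pos hcond]; rw [sw_b _ _ hne]
          have n1 : l' ≠ l₁ := by intro h; rw [h] at hlt; omega
          rw [sw_id _ _ _ n1 hnel]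
          have := H l' hl' n1 (by rw [hE]; exact cov) (by omega)
          rw [hE] at this; exact this
        · right; intro l' hl' hnel cov hlt
          simp only [if_pos hcond]; rw [sw_b _ _ hne]
          have n1 : l' ≠ l₁ := by intro h; rw [h] at hlt; omega
          rw [sw_id _ _ _ n1 hnel]
          have := H l' hl' n1 (by rw [hE]; exact cov) (by omega)
          rw [hE] at this; exact this
      · -- l not in the pair
        have hswl : sw l₁ l₂ l = l := sw_id _ _ _ hne1 hne2
        have key : ∀ l' ∈ L, l' ≠ l → Covers l' l.1 → l'.1 < l.1 →
            sw l₁ l₂ l' ∈ L ∧ sw l₁ l₂ l' ≠ l ∧ Covers (sw l₁ l₂ l') l.1 ∧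
            (sw l₁ l₂ l').1 < l.1 := by
          intro l' hl' hnel cov hlt
          refine ⟨σmem _ hl', ?_, (σcov _ _ hcond.2).mpr cov, by rw [σfst]; exact hlt⟩
          intro h; exact hnel (by rw [← sw_invol l₁ l₂ l', h, hswl])
        rcases Λ.periphL l hl with H | H
        · left; intro l' hl' hnel cov hlt
          simp only [if_pos hcond]; rw [hswl]
          obtain ⟨k1, k2, k3, k4⟩ := key l' hl' hnel cov hlt
          exact H _ k1 k2 k3 k4
        · right; intro l' hl' hnel cov hlt
          simp only [if_pos hcond]; rw [hswl]
          obtain ⟨k1, k2, k3, k4⟩ := key l' hl' hnel cov hlt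
          exact H _ k1 k2 k3 k4
    · rcases Λ.periphL l hl with H | H
      · left; intro l' hl' hnel cov hlt
        simp only [if_neg hcond]
        exact H _ hl' hnel cov hlt
      · right; intro l' hl' hnel cov hlt
        simp only [if_neg hcond]
        exact H _ hl' hnel cov hlt
  · -- periphR
    intro l hl
    by_cases hcond : l₁.1 ≤ l.2 - 1 ∧ l.2 - 1 + 1 ≤ m
    · have hne1 : l ≠ l₁ := by intro h; rw [h] at hcond; omega
      have hne2 : l ≠ l₂ := by intro h; rw [h] at hcond; omega
      have hswl : sw l₁ l₂ l = l := sw_id _ _ _ hne1 hne2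
      have key : ∀ l' ∈ L, l' ≠ l → Covers l' (l.2 - 1) → l.2 < l'.2 →
          sw l₁ l₂ l' ∈ L ∧ sw l₁ l₂ l' ≠ l ∧ Covers (sw l₁ l₂ l') (l.2 - 1) ∧
          l.2 < (sw l₁ l₂ l').2 := by
        intro l' hl' hnel cov hlt
        refine ⟨σmem _ hl', ?_, (σcov _ _ (by omega)).mpr cov, ?_⟩
        · intro h; exact hnel (by rw [← sw_invol l₁ l₂ l', h, hswl])
        · rcases eq_or_ne l' l₁ with rfl | e1
          · rw [sw_a]; omega
          rcases eq_or_ne l' l₂ with rfl | e2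
          · rw [sw_b _ _ hne]; omega
          · rw [sw_id _ _ _ e1 e2]; exact hlt
      rcases Λ.periphR l hl with H | H
      · left; intro l' hl' hnel cov hlt
        simp only [if_pos hcond]; rw [hswl]
        obtain ⟨k1, k2, k3, k4⟩ := key l' hl' hnel cov hlt
        exact H _ k1 k2 k3 k4
      · right; intro l' hl' hnel cov hlt
        simp only [if_pos hcond]; rw [hswl]
        obtain ⟨k1, k2, k3, k4⟩ := key l' hl' hnel cov hlt
        exact H _ k1 k2 k3 k4
    · rcases Λ.periphR l hl with H | H
      · left; intro l' hl' hnel cov hlt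
        simp only [if_neg hcond]
        exact H _ hl' hnel cov hlt
      · right; intro l' hl' hnel cov hlt
        simp only [if_neg hcond]
        exact H _ hl' hnel cov hlt
  · -- the crossing count decreases
    unfold crossCount
    dsimp only
    apply Finset.sum_lt_sum
    · intro e he
      by_cases hcond : l₁.1 ≤ e ∧ e ≤ m
      · by_cases hme : e + 1 ≤ m
        · apply le_of_eq
          have cR : l₁.1 ≤ e ∧ e + 1 ≤ m := ⟨hcond.1, hme⟩
          simp only [if_pos hcond, if_pos cR]
          apply Finset.card_nbij' (fun p => (sw l₁ l₂ p.1, sw l₁ l₂ p.2))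
            (fun p => (sw l₁ l₂ p.1, sw l₁ l₂ p.2))
          · intro p hp
            simp only [Finset.mem_coe, Finset.mem_filter, Finset.mem_product] at hp ⊢
            obtain ⟨⟨pm1, pm2⟩, c1', c2', h3, h4⟩ := hp
            exact ⟨⟨σmem _ pm1, σmem _ pm2⟩, (σcov _ e hcond.2).mpr c1',
              (σcov _ e hcond.2).mpr c2', h3, h4⟩
          · intro p hp
            simp only [Finset.mem_coe, Finset.mem_filter, Finset.mem_product] at hp ⊢
            obtain ⟨⟨pm1, pm2⟩, c1', c2', h3, h4⟩ := hp
            refine ⟨⟨σmem _ pm1, σmem _ pm2⟩, (σcov _ e hcond.2).mpr c1',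
              (σcov _ e hcond.2).mpr c2', ?_, ?_⟩
            · rw [sw_invol, sw_invol]; exact h3
            · rw [sw_invol, sw_invol]; exact h4
          · intro p _; dsimp only; rw [sw_invol, sw_invol]
          · intro p _; dsimp only; rw [sw_invol, sw_invol]
        · have hem : e = m := by omega
          subst hem
          have cR : ¬(l₁.1 ≤ e ∧ e + 1 ≤ e) := by omega
          simp only [if_pos hcond, if_neg cR]
          exact le_of_lt main_lt
      · apply le_of_eq
        have cR : ¬(l₁.1 ≤ e ∧ e + 1 ≤ m) := fun h => hcond ⟨h.1, by omega⟩
        simp only [if_neg hcond, if_neg cR]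
    · refine ⟨m, Finset.mem_Icc.mpr ⟨?_, ?_⟩, ?_⟩
      · have := (hL l₁ h₁).1; omega
      · have := (hL l₁ h₁).2.2; omega
      · have cL : l₁.1 ≤ m ∧ m ≤ m := ⟨ha₁, le_refl m⟩
        have cR : ¬(l₁.1 ≤ m ∧ m + 1 ≤ m) := by omega
        simp only [if_pos cL, if_neg cR]
        exact main_lt

/-- in any optimal layout for MLCM-P_PATH, no two lines sharing a
right endpoint (type C_r) and no two lines sharing a left endpoint (type C_l)
cross.  Quantitatively, swapping the right-end assignments of two crossing
type-C_r lines changes the relevant crossing count from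
`c₁ = 1+|M_↑|+2|M|+|B_↑|+|B|+|T|+|T_↓|+|M_↓|` to `c₂ = |T_↓|+|T|+|B_↑|+|B|`,
a reduction of `2|M|+|M_↑|+|M_↓|+1 ≥ 1`. -/
theorem stmt_12 (n : ℕ) (L : Finset (ℤ × ℤ))
    (hL : ∀ p ∈ L, 1 ≤ p.1 ∧ p.1 < p.2 ∧ p.2 ≤ (n : ℤ))
    (Λ : PathLayout L)
    (hopt : ∀ Λ' : PathLayout L, crossCount n L Λ ≤ crossCount n L Λ') :
    (∀ l₁ ∈ L, ∀ l₂ ∈ L, l₁ ≠ l₂ → (l₁.2 = l₂.2 ∨ l₁.1 = l₂.1) →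
      ∀ m : ℤ, ¬(Covers l₁ m ∧ Covers l₂ m ∧
        Λ.hl m l₁ < Λ.hl m l₂ ∧ Λ.hr m l₂ < Λ.hr m l₁)) ∧
    (∀ M Mu Md T Td B Bu : Finset (ℤ × ℤ),
      (1 + Mu.card + 2 * M.card + Bu.card + B.card + T.card + Td.card + Md.card) -
          (Td.card + T.card + Bu.card + B.card) =
        2 * M.card + Mu.card + Md.card + 1) := by
  constructor
  · rintro l₁ h1 l₂ h2 hne hsh m ⟨c1, c2, hlm, hrm⟩
    rcases hsh with hsh | hsh
    · obtain ⟨Λ', hΛ'⟩ := exists_better_right n L hL Λ l₁ l₂ h1 h2 hne hsh m c1 c2 hlm hrm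
      exact absurd (hopt Λ') (not_le.mpr hΛ')
    · obtain ⟨Λ', hΛ'⟩ := exists_better_left n L hL Λ l₁ l₂ h1 h2 hne hsh m c1 c2 hlm hrm
      exact absurd (hopt Λ') (not_le.mpr hΛ')
  · intro M Mu Md T Td B Bu
    omega
end

section
/- The dynamic program defined by f_r(π,1)=0, f_r(π,i)=min{ f_ℓ(π',i) : π restricted to L_i^r∖T_i^r equals π' restricted to L_i^ℓ∖T_i^ℓ } for i>1, and f_ℓ(π,i)=min over π' of ( f_r(π',i−1) + t(π',π) ) where t counts inversions between π' and π, correctly computes the minimum number of crossings of MLCM-P_PATH as min{ f_ℓ(π,n) : π ∈ Π_n^ℓ }, because MLCM-P_PATH has optimal substructure: any optimal sequence of side-permutations achieving f_ℓ(π,i) restricts to sequences achieving f_r(·,i−1), and the crossings on edge (i−1,i) equal the number of inversions t(π',π) between the permutation π' on the right side of station i−1 and π on the left side of station i. -/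
open List

set_option linter.unusedSectionVars false
set_option linter.unusedVariables false
set_option maxHeartbeats 1000000


open List

set_option linter.unusedSectionVars false
set_option linter.unusedVariables false

section Base
variable {α : Type*} [DecidableEq α]

lemma pair_sublist_iff {l : List α} (hnd : l.Nodup) {a b : α} (ha : a ∈ l) (hb : b ∈ l) :
    [a, b] <+ l ↔ l.idxOf a < l.idxOf b := by
  induction l with
  | nil => simp at ha
  | cons c t ih =>
    rcases List.nodup_cons.mp hnd with ⟨hc, ht⟩
    by_cases hac : a = c
    · subst hac
      rw [List.idxOf_cons_self]
      by_cases hbc : b = a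
      · subst hbc
        exact iff_of_false
          (fun hsub => hc (List.singleton_sublist.mp (List.cons_sublist_cons.mp hsub)))
          (by simp [List.idxOf_cons_self])
      · have hb' : b ∈ t := by
          rcases List.mem_cons.mp hb with h | h
          · exact absurd h hbc
          · exact h
        rw [List.idxOf_cons_ne _ (fun h => hbc h.symm)]
        simp only [Nat.succ_pos, iff_true]
        exact List.cons_sublist_cons.mpr (List.singleton_sublist.mpr hb')
    · have ha' : a ∈ t := by
        rcases List.mem_cons.mp ha with h | h
        · exact absurd h hac
        · exact h
      rw [List.idxOf_cons_ne _ (fun h => hac h.symm)]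
      by_cases hbc : b = c
      · subst hbc
        rw [List.idxOf_cons_self]
        simp only [Nat.not_lt_zero, iff_false]
        intro hsub
        rcases List.sublist_cons_iff.mp hsub with h | ⟨r, hr, hr'⟩
        · exact hc (h.subset (by simp))
        · exact hac (by injection hr)
      · have hb' : b ∈ t := by
          rcases List.mem_cons.mp hb with h | h
          · exact absurd h hbc
          · exact h
        rw [List.idxOf_cons_ne _ (fun h => hbc h.symm)]
        rw [Nat.succ_lt_succ_iff]
        rw [← ih ht ha' hb']
        constructor
        · intro hsub
          rcases List.sublist_cons_iff.mp hsub with h | ⟨r, hr, hr'⟩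
          · exact h
          · exact absurd (by injection hr) hac
        · exact fun h => h.cons c

lemma pair_sublist_filter {l : List α} {p : α → Bool} {a b : α}
    (pa : p a = true) (pb : p b = true) :
    [a, b] <+ l.filter p ↔ [a, b] <+ l := by
  constructor
  · exact fun h => h.trans (List.filter_sublist (l := l))
  · intro h
    have := h.filter p
    rwa [show ([a,b] : List α).filter p = [a,b] by simp [List.filter, pa, pb]] at this

lemma idx_filter_lt_iff {l : List α} (hnd : l.Nodup) {p : α → Bool} {a b : α}
    (ha : a ∈ l) (hb : b ∈ l) (pa : p a = true) (pb : p b = true) :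
    (l.filter p).idxOf a < (l.filter p).idxOf b ↔ l.idxOf a < l.idxOf b := by
  rw [← pair_sublist_iff (hnd.filter p) (List.mem_filter.mpr ⟨ha, pa⟩)
      (List.mem_filter.mpr ⟨hb, pb⟩),
    ← pair_sublist_iff hnd ha hb, pair_sublist_filter pa pb]

lemma idx_lt_iff_of_filter_eq {l l' : List α} (hl : l.Nodup) (hl' : l'.Nodup) {p : α → Bool}
    (h : l.filter p = l'.filter p) {a b : α} (ha : a ∈ l) (hb : b ∈ l)
    (ha' : a ∈ l') (hb' : b ∈ l') (pa : p a = true) (pb : p b = true) :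
    l.idxOf a < l.idxOf b ↔ l'.idxOf a < l'.idxOf b := by
  rw [← idx_filter_lt_iff hl ha hb pa pb, ← idx_filter_lt_iff hl' ha' hb' pa pb, h]

lemma eq_of_perm_of_idx {l l' : List α} (h : l.Perm l') (hnd : l.Nodup)
    (ho : ∀ a b, a ∈ l → b ∈ l → l.idxOf a < l.idxOf b → l'.idxOf a < l'.idxOf b) :
    l = l' := by
  induction l generalizing l' with
  | nil => exact (List.Perm.nil_eq h).symm ▸ rfl
  | cons a t ih =>
    rcases List.nodup_cons.mp hnd with ⟨hat, ht⟩
    cases l' with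
    | nil => exact absurd h.symm (by simp)
    | cons b t' =>
      by_cases hab : a = b
      · subst hab
        have ht' : t.Perm t' := h.cons_inv
        have : t = t' := by
          refine ih ht' ht (fun x y hx hy hxy => ?_)
          have hxa : x ≠ a := fun e => hat (e ▸ hx)
          have hya : y ≠ a := fun e => hat (e ▸ hy)
          have := ho x y (by simp [hx]) (by simp [hy]) (by
            rwa [List.idxOf_cons_ne _ (fun e => hxa e.symm),
              List.idxOf_cons_ne _ (fun e => hya e.symm), Nat.succ_lt_succ_iff])
          rwa [List.idxOf_cons_ne _ (fun e => hxa e.symm),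
            List.idxOf_cons_ne _ (fun e => hya e.symm), Nat.succ_lt_succ_iff] at this
        rw [this]
      · exfalso
        have hbmem : b ∈ a :: t := h.symm.subset (by simp)
        have hbt : b ∈ t := by
          rcases List.mem_cons.mp hbmem with e | e
          · exact absurd e.symm hab
          · exact e
        have h0 : (a :: t).idxOf a < (a :: t).idxOf b := by
          rw [List.idxOf_cons_self, List.idxOf_cons_ne _ hab]
          exact Nat.succ_pos _
        have := ho a b (by simp) (by simp [hbt]) h0
        rw [List.idxOf_cons_self] at this
        exact Nat.not_lt_zero _ this

lemma idx_lt_iff_of_pairwise {l : List α} {f : α → ℝ}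
    (hp : l.Pairwise (fun a b => f a < f b)) {a b : α} (ha : a ∈ l) (hb : b ∈ l) :
    l.idxOf a < l.idxOf b ↔ f a < f b := by
  have key : ∀ x y : α, x ∈ l → y ∈ l → l.idxOf x < l.idxOf y → f x < f y := by
    intro x y hx hy hxy
    have h1 := List.idxOf_lt_length_iff.mpr hx
    have h2 := List.idxOf_lt_length_iff.mpr hy
    have := List.pairwise_iff_get.mp hp ⟨l.idxOf x, h1⟩ ⟨l.idxOf y, h2⟩ hxy
    rwa [List.idxOf_get, List.idxOf_get] at this
  constructor
  · exact key a b ha hb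
  · intro hf
    rcases lt_trichotomy (l.idxOf a) (l.idxOf b) with h' | h' | h'
    · exact h'
    · exact absurd hf (by rw [(List.idxOf_inj ha).mp h']; exact lt_irrefl _)
    · exact absurd (key b a hb ha h') (by linarith)

noncomputable def sortedBy (S : Finset α) (f : α → ℝ) : List α :=
  S.toList.mergeSort (fun a b => decide (f a ≤ f b))

lemma sortedBy_perm (S : Finset α) (f : α → ℝ) : (sortedBy S f).Perm S.toList :=
  List.mergeSort_perm _ _

lemma mem_sortedBy {S : Finset α} {f : α → ℝ} {a : α} : a ∈ sortedBy S f ↔ a ∈ S := by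
  rw [(sortedBy_perm S f).mem_iff, Finset.mem_toList]

lemma sortedBy_nodup (S : Finset α) (f : α → ℝ) : (sortedBy S f).Nodup :=
  (sortedBy_perm S f).nodup_iff.mpr S.nodup_toList

lemma sortedBy_pairwise {S : Finset α} {f : α → ℝ}
    (hf : ∀ a ∈ S, ∀ b ∈ S, f a = f b → a = b) :
    (sortedBy S f).Pairwise (fun a b => f a < f b) := by
  have h1 : (sortedBy S f).Pairwise (fun a b => f a ≤ f b) := by
    have := List.pairwise_mergeSort (le := fun a b : α => decide (f a ≤ f b))
      (fun a b c hab hbc => by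
        simp only [decide_eq_true_eq] at *; linarith)
      (fun a b => by
        simp only [Bool.or_eq_true, decide_eq_true_eq]; exact le_total _ _)
      S.toList
    refine this.imp ?_
    simp only [decide_eq_true_eq]; exact fun h => h
  have h2 : (sortedBy S f).Pairwise (· ≠ ·) := sortedBy_nodup S f
  refine (h1.and h2).imp_of_mem ?_
  intro a b ha hb hab
  rcases hab with ⟨hle, hne⟩
  rcases lt_or_eq_of_le hle with h | h
  · exact h
  · exact absurd (hf a (mem_sortedBy.mp ha) b (mem_sortedBy.mp hb) h) hne

lemma idx_lt_iff_sortedBy {S : Finset α} {f : α → ℝ}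
    (hf : ∀ a ∈ S, ∀ b ∈ S, f a = f b → a = b) {a b : α} (ha : a ∈ S) (hb : b ∈ S) :
    (sortedBy S f).idxOf a < (sortedBy S f).idxOf b ↔ f a < f b :=
  idx_lt_iff_of_pairwise (sortedBy_pairwise hf) (mem_sortedBy.mpr ha) (mem_sortedBy.mpr hb)

lemma front_outermost {A B : List α} {a b : α} (hA : a ∈ A) (hB : b ∉ A) :
    (A ++ B).idxOf a < (A ++ B).idxOf b := by
  rw [List.idxOf_append_of_mem hA, List.idxOf_append_of_notMem hB]
  calc A.idxOf a < A.length := List.idxOf_lt_length_iff.mpr hA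
    _ ≤ A.length + B.idxOf b := Nat.le_add_right _ _

lemma Icc_int_succ (b : ℤ) (h : (1:ℤ) ≤ b + 1) :
    Finset.Icc (1:ℤ) (b+1) = insert (b+1) (Finset.Icc 1 b) := by
  ext x; simp only [Finset.mem_Icc, Finset.mem_insert]; omega

lemma sum_Icc_int_succ (f : ℤ → ℕ) (b : ℤ) (h : (1:ℤ) ≤ b + 1) :
    ∑ m ∈ Finset.Icc (1:ℤ) (b+1), f m = (∑ m ∈ Finset.Icc (1:ℤ) b, f m) + f (b+1) := by
  rw [Icc_int_succ b h, Finset.sum_insert (by simp [Finset.mem_Icc])]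
  ring

end Base



/-- Admissible permutations (listed, say, bottom to top) of the lines on the
left side of station `i` (the lines using edge `(i-1, i)`), satisfying the
periphery condition: every line terminating at station `i` is outermost among
the lines continuing past `i`. -/
def PiL (L : Finset (ℤ × ℤ)) (i : ℤ) : Set (List (ℤ × ℤ)) :=
  {π | π.Perm (L.filter (fun l => Covers l (i - 1))).toList ∧
    ∀ l ∈ π, l.2 = i →
      (∀ l' ∈ π, i < l'.2 → π.idxOf l < π.idxOf l') ∨
      (∀ l' ∈ π, i < l'.2 → π.idxOf l' < π.idxOf l)}

/-- Admissible permutations of the lines on the right side of station `i`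
(the lines using edge `(i, i+1)`), satisfying the periphery condition: every
line whose left end is at station `i` is outermost among the lines coming from
the left of `i`. -/
def PiR (L : Finset (ℤ × ℤ)) (i : ℤ) : Set (List (ℤ × ℤ)) :=
  {π | π.Perm (L.filter (fun l => Covers l i)).toList ∧
    ∀ l ∈ π, l.1 = i →
      (∀ l' ∈ π, l'.1 < i → π.idxOf l < π.idxOf l') ∨
      (∀ l' ∈ π, l'.1 < i → π.idxOf l' < π.idxOf l)}

/-- Whether a line passes through station `i` (continues on both sides). -/
def passFilter (i : ℤ) : ℤ × ℤ → Bool := fun l => decide (l.1 < i ∧ i < l.2)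

/-- The number of inversions `t(π', π)`: pairs of lines ordered oppositely in
`π'` and `π`. -/
def invCount (π' π : List (ℤ × ℤ)) : ℕ :=
  ((π.toFinset ×ˢ π.toFinset).filter (fun ab : (ℤ × ℤ) × (ℤ × ℤ) =>
    π'.idxOf ab.1 < π'.idxOf ab.2 ∧ π.idxOf ab.2 < π.idxOf ab.1)).card



section Dom

lemma beqP (x a : ℤ × ℤ) :
    (@BEq.beq _ instBEqProd x a) = (@BEq.beq _ instBEqOfDecidableEq x a) := by
  by_cases h : x = a
  · subst h
    rw [show (@BEq.beq _ instBEqProd x x) = true by cases x; simp [instBEqProd]]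
    rw [show (@BEq.beq _ instBEqOfDecidableEq x x) = true from by
      simp [instBEqOfDecidableEq]]
  · rw [show (@BEq.beq _ instBEqProd x a) = false by
      cases x; cases a; simp [instBEqProd]; intro h1 h2; exact h (by simp [h1, h2])]
    rw [show (@BEq.beq _ instBEqOfDecidableEq x a) = false from by
      simp [instBEqOfDecidableEq, h]]

lemma idxP (a : ℤ × ℤ) (l : List (ℤ × ℤ)) :
    @List.idxOf (ℤ × ℤ) instBEqProd a l =
    @List.idxOf (ℤ × ℤ) instBEqOfDecidableEq a l := by
  unfold List.idxOf
  congr 1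
  funext x
  exact beqP x a

variable {L : Finset (ℤ × ℤ)}

lemma PiL_nodup {i : ℤ} {π : List (ℤ × ℤ)} (h : π ∈ PiL L i) : π.Nodup :=
  h.1.nodup_iff.mpr (Finset.nodup_toList _)

lemma PiR_nodup {i : ℤ} {π : List (ℤ × ℤ)} (h : π ∈ PiR L i) : π.Nodup :=
  h.1.nodup_iff.mpr (Finset.nodup_toList _)

lemma PiL_mem_iff {i : ℤ} {π : List (ℤ × ℤ)} (h : π ∈ PiL L i) {a : ℤ × ℤ} :
    a ∈ π ↔ a ∈ L ∧ Covers a (i - 1) := by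
  rw [h.1.mem_iff, Finset.mem_toList, Finset.mem_filter]

lemma PiR_mem_iff {i : ℤ} {π : List (ℤ × ℤ)} (h : π ∈ PiR L i) {a : ℤ × ℤ} :
    a ∈ π ↔ a ∈ L ∧ Covers a i := by
  rw [h.1.mem_iff, Finset.mem_toList, Finset.mem_filter]

lemma PiL_toFinset {i : ℤ} {π : List (ℤ × ℤ)} (h : π ∈ PiL L i) :
    π.toFinset = L.filter (fun l => Covers l (i - 1)) := by
  rw [List.toFinset_eq_of_perm _ _ h.1, Finset.toList_toFinset]

lemma PiR_toFinset {i : ℤ} {π : List (ℤ × ℤ)} (h : π ∈ PiR L i) :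
    π.toFinset = L.filter (fun l => Covers l i) := by
  rw [List.toFinset_eq_of_perm _ _ h.1, Finset.toList_toFinset]

/-- A canonical element of `PiL L i`: terminating lines first. -/
noncomputable def piL0 (L : Finset (ℤ × ℤ)) (i : ℤ) : List (ℤ × ℤ) :=
  (L.filter (fun l => Covers l (i-1) ∧ l.2 = i)).toList ++
  (L.filter (fun l => Covers l (i-1) ∧ l.2 ≠ i)).toList

lemma piL0_mem (L : Finset (ℤ × ℤ)) (i : ℤ) : piL0 L i ∈ PiL L i := by
  unfold piL0
  constructor
  · apply List.perm_of_nodup_nodup_toFinset_eq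
    · rw [List.nodup_append]
      refine ⟨Finset.nodup_toList _, Finset.nodup_toList _, fun a ha b ha' hab => ?_⟩
      subst hab
      rw [Finset.mem_toList, Finset.mem_filter] at ha ha'
      exact ha'.2.2 ha.2.2
    · exact Finset.nodup_toList _
    · rw [List.toFinset_append, Finset.toList_toFinset, Finset.toList_toFinset,
        Finset.toList_toFinset]
      ext a
      simp only [Finset.mem_union, Finset.mem_filter]
      tauto
  · intro l hl hl2
    left
    intro l' hl' hl'2
    have hlA : l ∈ (L.filter (fun l => Covers l (i-1) ∧ l.2 = i)).toList := by
      rcases List.mem_append.mp hl with h | h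
      · exact h
      · rw [Finset.mem_toList, Finset.mem_filter] at h
        exact absurd hl2 h.2.2
    have hl'A : l' ∉ (L.filter (fun l => Covers l (i-1) ∧ l.2 = i)).toList := by
      intro h
      rw [Finset.mem_toList, Finset.mem_filter] at h
      omega
    rw [idxP, idxP]
    exact front_outermost hlA hl'A

/-- A canonical element of `PiR L i`: starting lines first. -/
noncomputable def piR0 (L : Finset (ℤ × ℤ)) (i : ℤ) : List (ℤ × ℤ) :=
  (L.filter (fun l => Covers l i ∧ l.1 = i)).toList ++
  (L.filter (fun l => Covers l i ∧ l.1 ≠ i)).toList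

lemma piR0_mem (L : Finset (ℤ × ℤ)) (i : ℤ) : piR0 L i ∈ PiR L i := by
  unfold piR0
  constructor
  · apply List.perm_of_nodup_nodup_toFinset_eq
    · rw [List.nodup_append]
      refine ⟨Finset.nodup_toList _, Finset.nodup_toList _, fun a ha b ha' hab => ?_⟩
      subst hab
      rw [Finset.mem_toList, Finset.mem_filter] at ha ha'
      exact ha'.2.2 ha.2.2
    · exact Finset.nodup_toList _
    · rw [List.toFinset_append, Finset.toList_toFinset, Finset.toList_toFinset,
        Finset.toList_toFinset]
      ext a
      simp only [Finset.mem_union, Finset.mem_filter]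
      tauto
  · intro l hl hl1
    left
    intro l' hl' hl'1
    have hlA : l ∈ (L.filter (fun l => Covers l i ∧ l.1 = i)).toList := by
      rcases List.mem_append.mp hl with h | h
      · exact h
      · rw [Finset.mem_toList, Finset.mem_filter] at h
        exact absurd hl1 h.2.2
    have hl'A : l' ∉ (L.filter (fun l => Covers l i ∧ l.1 = i)).toList := by
      intro h
      rw [Finset.mem_toList, Finset.mem_filter] at h
      omega
    rw [idxP, idxP]
    exact front_outermost hlA hl'A

lemma passFilter_eq_true {i : ℤ} {a : ℤ × ℤ} :
    passFilter i a = true ↔ a.1 < i ∧ i < a.2 := by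
  simp [passFilter]

/-- Extension of `σ ∈ PiR L i` to an element of `PiL L i` agreeing on passing lines. -/
noncomputable def extL (L : Finset (ℤ × ℤ)) (σ : List (ℤ × ℤ)) (i : ℤ) : List (ℤ × ℤ) :=
  (L.filter (fun l => Covers l (i-1) ∧ l.2 = i)).toList ++ σ.filter (passFilter i)

lemma extL_spec {σ : List (ℤ × ℤ)} {i : ℤ} (hσ : σ ∈ PiR L i) :
    extL L σ i ∈ PiL L i ∧
      σ.filter (passFilter i) = (extL L σ i).filter (passFilter i) := by
  have hmemσ : ∀ a ∈ σ, a ∈ L ∧ Covers a i := fun a ha => (PiR_mem_iff hσ).mp ha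
  have hfmem : ∀ a ∈ σ.filter (passFilter i), a ∈ L ∧ Covers a (i-1) ∧ a.2 ≠ i := by
    intro a ha
    rw [List.mem_filter, passFilter_eq_true] at ha
    rcases hmemσ a ha.1 with ⟨haL, hc⟩
    rcases hc with ⟨h1, h2⟩
    exact ⟨haL, ⟨by omega, by omega⟩, by omega⟩
  have hnotmemA : ∀ a ∈ σ.filter (passFilter i),
      a ∉ (L.filter (fun l => Covers l (i-1) ∧ l.2 = i)).toList := by
    intro a ha h
    rw [Finset.mem_toList, Finset.mem_filter] at h
    exact (hfmem a ha).2.2 h.2.2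
  have hmem : extL L σ i ∈ PiL L i := by
    unfold extL
    constructor
    · apply List.perm_of_nodup_nodup_toFinset_eq
      · rw [List.nodup_append]
        refine ⟨Finset.nodup_toList _, (PiR_nodup hσ).filter _, fun a ha b ha' hab => ?_⟩
        exact hnotmemA b ha' (hab ▸ ha)
      · exact Finset.nodup_toList _
      · rw [List.toFinset_append, Finset.toList_toFinset, Finset.toList_toFinset]
        ext a
        simp only [Finset.mem_union, Finset.mem_filter, List.mem_toFinset, List.mem_filter,
          passFilter_eq_true]
        constructor
        · rintro (⟨h1, h2, h3⟩ | ⟨h1, h2, h3⟩)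
          · exact ⟨h1, h2⟩
          · rcases hmemσ a h1 with ⟨haL, hc⟩
            rcases hc with ⟨hc1, hc2⟩
            exact ⟨haL, by constructor <;> omega⟩
        · rintro ⟨h1, h2, h3⟩
          by_cases he : a.2 = i
          · exact Or.inl ⟨h1, ⟨h2, h3⟩, he⟩
          · refine Or.inr ⟨(PiR_mem_iff hσ).mpr ⟨h1, ⟨by omega, by omega⟩⟩, by omega, by omega⟩
    · intro l hl hl2
      left
      intro l' hl' hl'2
      have hlA : l ∈ (L.filter (fun l => Covers l (i-1) ∧ l.2 = i)).toList := by
        rcases List.mem_append.mp hl with h | h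
        · exact h
        · exact absurd hl2 (hfmem l h).2.2
      have hl'A : l' ∉ (L.filter (fun l => Covers l (i-1) ∧ l.2 = i)).toList := by
        intro h
        rw [Finset.mem_toList, Finset.mem_filter] at h
        omega
      rw [idxP, idxP]
      exact front_outermost hlA hl'A
  refine ⟨hmem, ?_⟩
  unfold extL
  rw [List.filter_append,
    show (List.filter (passFilter i) (L.filter (fun l => Covers l (i-1) ∧ l.2 = i)).toList) = []
      from List.filter_eq_nil_iff.mpr (fun a ha => by
        rw [Finset.mem_toList, Finset.mem_filter] at ha
        rw [passFilter_eq_true]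
        omega),
    List.nil_append,
    List.filter_eq_self.mpr (fun a ha => (List.mem_filter.mp ha).2)]

end Dom

section Dom2

variable {L : Finset (ℤ × ℤ)}

/-- sorted order on the left of edge `m` (right side of station `m`) -/
noncomputable def sigL (L : Finset (ℤ × ℤ)) (Λ : PathLayout L) (m : ℤ) : List (ℤ × ℤ) :=
  sortedBy (L.filter (fun l => Covers l m)) (Λ.hl m)

/-- sorted order on the right of edge `m` (left side of station `m+1`) -/
noncomputable def tauR (L : Finset (ℤ × ℤ)) (Λ : PathLayout L) (m : ℤ) : List (ℤ × ℤ) :=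
  sortedBy (L.filter (fun l => Covers l m)) (Λ.hr m)

lemma injL' (Λ : PathLayout L) (m : ℤ) :
    ∀ a ∈ L.filter (fun l => Covers l m), ∀ b ∈ L.filter (fun l => Covers l m),
      Λ.hl m a = Λ.hl m b → a = b := by
  intro a ha b hb h
  rw [Finset.mem_filter] at ha hb
  exact Λ.injL m a ha.1 b hb.1 ha.2 hb.2 h

lemma injR' (Λ : PathLayout L) (m : ℤ) :
    ∀ a ∈ L.filter (fun l => Covers l m), ∀ b ∈ L.filter (fun l => Covers l m),
      Λ.hr m a = Λ.hr m b → a = b := by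
  intro a ha b hb h
  rw [Finset.mem_filter] at ha hb
  exact Λ.injR m a ha.1 b hb.1 ha.2 hb.2 h

lemma mem_sigL {Λ : PathLayout L} {m : ℤ} {a : ℤ × ℤ} :
    a ∈ sigL L Λ m ↔ a ∈ L ∧ Covers a m := by
  rw [sigL, mem_sortedBy, Finset.mem_filter]

lemma mem_tauR {Λ : PathLayout L} {m : ℤ} {a : ℤ × ℤ} :
    a ∈ tauR L Λ m ↔ a ∈ L ∧ Covers a m := by
  rw [tauR, mem_sortedBy, Finset.mem_filter]

lemma idx_sigL {Λ : PathLayout L} {m : ℤ} {a b : ℤ × ℤ}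
    (ha : a ∈ sigL L Λ m) (hb : b ∈ sigL L Λ m) :
    (sigL L Λ m).idxOf a < (sigL L Λ m).idxOf b ↔ Λ.hl m a < Λ.hl m b := by
  rw [idxP, idxP]
  exact idx_lt_iff_sortedBy (injL' Λ m) (mem_sortedBy.mp ha) (mem_sortedBy.mp hb)

lemma idx_tauR {Λ : PathLayout L} {m : ℤ} {a b : ℤ × ℤ}
    (ha : a ∈ tauR L Λ m) (hb : b ∈ tauR L Λ m) :
    (tauR L Λ m).idxOf a < (tauR L Λ m).idxOf b ↔ Λ.hr m a < Λ.hr m b := by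
  rw [idxP, idxP]
  exact idx_lt_iff_sortedBy (injR' Λ m) (mem_sortedBy.mp ha) (mem_sortedBy.mp hb)

lemma sigL_memPiR (Λ : PathLayout L) (m : ℤ) : sigL L Λ m ∈ PiR L m := by
  refine ⟨sortedBy_perm _ _, ?_⟩
  intro l hl hl1
  have hlL : l ∈ L ∧ Covers l m := mem_sigL.mp hl
  rcases Λ.periphL l hlL.1 with h | h
  · right
    intro l' hl' hlt
    have hl'L : l' ∈ L ∧ Covers l' m := mem_sigL.mp hl'
    rw [idx_sigL hl' hl]
    have := h l' hl'L.1 (fun e => by rw [e] at hlt; omega) (hl1 ▸ hl'L.2) (by omega)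
    rwa [hl1] at this
  · left
    intro l' hl' hlt
    have hl'L : l' ∈ L ∧ Covers l' m := mem_sigL.mp hl'
    rw [idx_sigL hl hl']
    have := h l' hl'L.1 (fun e => by rw [e] at hlt; omega) (hl1 ▸ hl'L.2) (by omega)
    rwa [hl1] at this

lemma tauR_memPiL (Λ : PathLayout L) (m : ℤ) : tauR L Λ m ∈ PiL L (m + 1) := by
  constructor
  · rw [show (m + 1 - 1 : ℤ) = m by ring]
    exact sortedBy_perm _ _
  · intro l hl hl2
    have hlL : l ∈ L ∧ Covers l m := mem_tauR.mp hl
    have hm : l.2 - 1 = m := by omega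
    rcases Λ.periphR l hlL.1 with h | h
    · right
      intro l' hl' hlt
      have hl'L : l' ∈ L ∧ Covers l' m := mem_tauR.mp hl'
      rw [idx_tauR hl' hl]
      have := h l' hl'L.1 (fun e => by rw [e] at hlt; omega) (hm ▸ hl'L.2) (by omega)
      rwa [hm] at this
    · left
      intro l' hl' hlt
      have hl'L : l' ∈ L ∧ Covers l' m := mem_tauR.mp hl'
      rw [idx_tauR hl hl']
      have := h l' hl'L.1 (fun e => by rw [e] at hlt; omega) (hm ▸ hl'L.2) (by omega)
      rwa [hm] at this

lemma filter_agree (Λ : PathLayout L) (m : ℤ) :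
    (sigL L Λ (m + 1)).filter (passFilter (m + 1)) =
    (tauR L Λ m).filter (passFilter (m + 1)) := by
  have hndσ : (sigL L Λ (m+1)).Nodup := sortedBy_nodup _ _
  have hndτ : (tauR L Λ m).Nodup := sortedBy_nodup _ _
  have hcov : ∀ a : ℤ × ℤ, passFilter (m+1) a = true →
      (Covers a (m+1) ↔ Covers a m) := by
    intro a ha
    rw [passFilter_eq_true] at ha
    unfold Covers
    omega
  apply eq_of_perm_of_idx
  · apply List.perm_of_nodup_nodup_toFinset_eq (hndσ.filter _) (hndτ.filter _)
    ext a
    simp only [List.mem_toFinset, List.mem_filter, mem_sigL, mem_tauR]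
    constructor
    · rintro ⟨⟨h1, h2⟩, h3⟩
      exact ⟨⟨h1, (hcov a h3).mp h2⟩, h3⟩
    · rintro ⟨⟨h1, h2⟩, h3⟩
      exact ⟨⟨h1, (hcov a h3).mpr h2⟩, h3⟩
  · exact hndσ.filter _
  · intro a b ha hb hab
    rw [List.mem_filter] at ha hb
    have hpa := ha.2
    have hpb := hb.2
    have haσ := ha.1
    have hbσ := hb.1
    have haL := mem_sigL.mp haσ
    have hbL := mem_sigL.mp hbσ
    have haτ : a ∈ tauR L Λ m := mem_tauR.mpr ⟨haL.1, (hcov a hpa).mp haL.2⟩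
    have hbτ : b ∈ tauR L Λ m := mem_tauR.mpr ⟨hbL.1, (hcov b hpb).mp hbL.2⟩
    rw [idx_filter_lt_iff hndσ haσ hbσ hpa hpb] at hab
    rw [idx_filter_lt_iff hndτ haτ hbτ hpa hpb]
    rw [← idxP, ← idxP] at hab ⊢
    rw [idx_sigL haσ hbσ] at hab
    rw [idx_tauR haτ hbτ]
    exact (Λ.admissible m a haL.1 b hbL.1 ((hcov a hpa).mp haL.2) haL.2
      ((hcov b hpb).mp hbL.2) hbL.2).mpr hab

lemma inv_eq_cross (m : ℤ) (σ τ : List (ℤ × ℤ)) (f g : (ℤ × ℤ) → ℝ)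
    (hτ : τ.toFinset = L.filter (fun l => Covers l m))
    (hf : ∀ a ∈ τ, ∀ b ∈ τ, (f a < f b ↔ σ.idxOf a < σ.idxOf b))
    (hg : ∀ a ∈ τ, ∀ b ∈ τ, (g a < g b ↔ τ.idxOf a < τ.idxOf b)) :
    invCount σ τ =
      ((L ×ˢ L).filter (fun p : (ℤ × ℤ) × (ℤ × ℤ) => Covers p.1 m ∧ Covers p.2 m ∧
        f p.1 < f p.2 ∧ g p.2 < g p.1)).card := by
  unfold invCount
  congr 1
  apply Finset.ext
  rintro ⟨a, b⟩
  simp only [Finset.mem_filter, Finset.mem_product, List.mem_toFinset]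
  constructor
  · rintro ⟨⟨ha, hb⟩, h1, h2⟩
    have ha' : a ∈ L ∧ Covers a m := by
      have := List.mem_toFinset.mpr ha
      rw [hτ, Finset.mem_filter] at this
      exact this
    have hb' : b ∈ L ∧ Covers b m := by
      have := List.mem_toFinset.mpr hb
      rw [hτ, Finset.mem_filter] at this
      exact this
    exact ⟨⟨ha'.1, hb'.1⟩, ha'.2, hb'.2, (hf a ha b hb).mpr h1, (hg b hb a ha).mpr h2⟩
  · rintro ⟨⟨haL, hbL⟩, hca, hcb, h1, h2⟩
    have ha : a ∈ τ := by
      rw [← List.mem_toFinset, hτ, Finset.mem_filter]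
      exact ⟨haL, hca⟩
    have hb : b ∈ τ := by
      rw [← List.mem_toFinset, hτ, Finset.mem_filter]
      exact ⟨hbL, hcb⟩
    exact ⟨⟨ha, hb⟩, (hf a ha b hb).mp h1, (hg b hb a ha).mp h2⟩

end Dom2

section Dom3

variable {L : Finset (ℤ × ℤ)}

lemma inv_sig_tau (Λ : PathLayout L) (m : ℤ) :
    invCount (sigL L Λ m) (tauR L Λ m) =
      ((L ×ˢ L).filter (fun p : (ℤ × ℤ) × (ℤ × ℤ) => Covers p.1 m ∧ Covers p.2 m ∧
        Λ.hl m p.1 < Λ.hl m p.2 ∧ Λ.hr m p.2 < Λ.hr m p.1)).card := by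
  apply inv_eq_cross m (sigL L Λ m) (tauR L Λ m) (Λ.hl m) (Λ.hr m)
  · unfold tauR
    rw [List.toFinset_eq_of_perm _ _ (sortedBy_perm _ _), Finset.toList_toFinset]
  · intro a ha b hb
    have ha' : a ∈ sigL L Λ m := mem_sigL.mpr (mem_tauR.mp ha)
    have hb' : b ∈ sigL L Λ m := mem_sigL.mpr (mem_tauR.mp hb)
    exact (idx_sigL ha' hb').symm
  · intro a ha b hb
    exact (idx_tauR ha hb).symm

lemma up_bound (fr fl : List (ℤ × ℤ) → ℤ → ℕ)
    (h1 : ∀ π ∈ PiR L 1, fr π 1 = 0)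
    (h2 : ∀ i : ℤ, 1 < i → ∀ π ∈ PiR L i,
      fr π i = sInf {c : ℕ | ∃ π' ∈ PiL L i,
        π.filter (passFilter i) = π'.filter (passFilter i) ∧ c = fl π' i})
    (h3 : ∀ i : ℤ, 1 < i → ∀ π ∈ PiL L i,
      fl π i = sInf {c : ℕ | ∃ π' ∈ PiR L (i - 1),
        c = fr π' (i - 1) + invCount π' π})
    (Λ : PathLayout L) :
    ∀ k : ℕ, fl (tauR L Λ ((k:ℤ)+1)) ((k:ℤ)+2) ≤
      ∑ m ∈ Finset.Icc (1:ℤ) ((k:ℤ)+1),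
        ((L ×ˢ L).filter (fun p : (ℤ × ℤ) × (ℤ × ℤ) => Covers p.1 m ∧ Covers p.2 m ∧
          Λ.hl m p.1 < Λ.hl m p.2 ∧ Λ.hr m p.2 < Λ.hr m p.1)).card := by
  intro k
  induction k with
  | zero =>
    simp only [Nat.cast_zero, zero_add]
    rw [Finset.Icc_self, Finset.sum_singleton]
    have hτ : tauR L Λ 1 ∈ PiL L 2 := by
      have := tauR_memPiL Λ 1
      rwa [show (1:ℤ)+1 = 2 by norm_num] at this
    rw [h3 2 (by norm_num) _ hτ]
    have hmem : fr (sigL L Λ 1) 1 + invCount (sigL L Λ 1) (tauR L Λ 1) ∈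
        {c : ℕ | ∃ π' ∈ PiR L (2 - 1), c = fr π' (2 - 1) + invCount π' (tauR L Λ 1)} := by
      refine ⟨sigL L Λ 1, ?_, ?_⟩
      · rw [show (2:ℤ)-1 = 1 by norm_num]
        exact sigL_memPiR Λ 1
      · simp only [show (2:ℤ)-1 = 1 by norm_num]
    calc sInf {c : ℕ | ∃ π' ∈ PiR L (2 - 1), c = fr π' (2 - 1) + invCount π' (tauR L Λ 1)}
        ≤ fr (sigL L Λ 1) 1 + invCount (sigL L Λ 1) (tauR L Λ 1) := Nat.sInf_le hmem
      _ = _ := by rw [h1 _ (sigL_memPiR Λ 1), zero_add, inv_sig_tau]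
  | succ k ih =>
    have e1 : ((k+1:ℕ):ℤ) = (k:ℤ)+1 := by push_cast; ring
    rw [e1]
    rw [sum_Icc_int_succ _ ((k:ℤ)+1) (by omega)]
    rw [show (k:ℤ)+1+1 = (k:ℤ)+2 by ring, show (k:ℤ)+1+2 = (k:ℤ)+3 by ring]
    have hτ : tauR L Λ ((k:ℤ)+2) ∈ PiL L ((k:ℤ)+3) := by
      have := tauR_memPiL Λ ((k:ℤ)+2)
      rwa [show (k:ℤ)+2+1 = (k:ℤ)+3 by ring] at this
    rw [h3 ((k:ℤ)+3) (by omega) _ hτ]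
    have e2 : (k:ℤ)+3-1 = (k:ℤ)+2 := by ring
    have hmem : fr (sigL L Λ ((k:ℤ)+2)) ((k:ℤ)+2) +
        invCount (sigL L Λ ((k:ℤ)+2)) (tauR L Λ ((k:ℤ)+2)) ∈
        {c : ℕ | ∃ π' ∈ PiR L ((k:ℤ)+3-1),
          c = fr π' ((k:ℤ)+3-1) + invCount π' (tauR L Λ ((k:ℤ)+2))} := by
      refine ⟨sigL L Λ ((k:ℤ)+2), ?_, ?_⟩
      · rw [e2]
        exact sigL_memPiR Λ ((k:ℤ)+2)
      · simp only [e2]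
    have step1 := Nat.sInf_le hmem
    have hfr : fr (sigL L Λ ((k:ℤ)+2)) ((k:ℤ)+2) ≤ fl (tauR L Λ ((k:ℤ)+1)) ((k:ℤ)+2) := by
      rw [h2 ((k:ℤ)+2) (by omega) _ (sigL_memPiR Λ ((k:ℤ)+2))]
      apply Nat.sInf_le
      refine ⟨tauR L Λ ((k:ℤ)+1), ?_, ?_, rfl⟩
      · have := tauR_memPiL Λ ((k:ℤ)+1)
        rwa [show (k:ℤ)+1+1 = (k:ℤ)+2 by ring] at this
      · have := filter_agree Λ ((k:ℤ)+1)
        rwa [show (k:ℤ)+1+1 = (k:ℤ)+2 by ring] at this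
    calc sInf {c : ℕ | ∃ π' ∈ PiR L ((k:ℤ)+3-1),
          c = fr π' ((k:ℤ)+3-1) + invCount π' (tauR L Λ ((k:ℤ)+2))}
        ≤ fr (sigL L Λ ((k:ℤ)+2)) ((k:ℤ)+2) +
          invCount (sigL L Λ ((k:ℤ)+2)) (tauR L Λ ((k:ℤ)+2)) := step1
      _ ≤ fl (tauR L Λ ((k:ℤ)+1)) ((k:ℤ)+2) +
          invCount (sigL L Λ ((k:ℤ)+2)) (tauR L Λ ((k:ℤ)+2)) :=
          Nat.add_le_add_right hfr _
      _ ≤ _ := by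
          rw [inv_sig_tau Λ ((k:ℤ)+2)]
          exact Nat.add_le_add_right ih _

lemma chain_exists (fr fl : List (ℤ × ℤ) → ℤ → ℕ)
    (h1 : ∀ π ∈ PiR L 1, fr π 1 = 0)
    (h2 : ∀ i : ℤ, 1 < i → ∀ π ∈ PiR L i,
      fr π i = sInf {c : ℕ | ∃ π' ∈ PiL L i,
        π.filter (passFilter i) = π'.filter (passFilter i) ∧ c = fl π' i})
    (h3 : ∀ i : ℤ, 1 < i → ∀ π ∈ PiL L i,
      fl π i = sInf {c : ℕ | ∃ π' ∈ PiR L (i - 1),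
        c = fr π' (i - 1) + invCount π' π}) :
    ∀ k : ℕ, ∀ π ∈ PiL L ((k : ℤ) + 2),
      ∃ σ τ : ℤ → List (ℤ × ℤ),
        (∀ m : ℤ, 1 ≤ m → m ≤ (k : ℤ) + 1 → σ m ∈ PiR L m ∧ τ m ∈ PiL L (m + 1)) ∧
        (∀ m : ℤ, 1 ≤ m → m ≤ (k : ℤ) →
          (τ m).filter (passFilter (m + 1)) = (σ (m + 1)).filter (passFilter (m + 1))) ∧
        fl π ((k : ℤ) + 2) = (∑ m ∈ Finset.Icc (1 : ℤ) ((k : ℤ) + 1), invCount (σ m) (τ m)) ∧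
        τ ((k : ℤ) + 1) = π := by
  intro k
  induction k with
  | zero =>
    intro π hπ
    have hπ2 : π ∈ PiL L 2 := by
      rwa [show ((0:ℕ):ℤ) + 2 = 2 by norm_num] at hπ
    have hfl := h3 2 (by norm_num) π hπ2
    have hne : {c : ℕ | ∃ π' ∈ PiR L (2-1), c = fr π' (2-1) + invCount π' π}.Nonempty :=
      ⟨_, ⟨piR0 L (2-1), piR0_mem L (2-1), rfl⟩⟩
    obtain ⟨σ0, hσ0, heq⟩ : ∃ π' ∈ PiR L (2-1), fl π 2 = fr π' (2-1) + invCount π' π := by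
      rw [hfl]
      exact Nat.sInf_mem hne
    rw [show (2:ℤ)-1 = 1 by norm_num] at hσ0 heq
    refine ⟨fun _ => σ0, fun _ => π, ?_, ?_, ?_, rfl⟩
    · intro m hm1 hm2
      have hm : m = 1 := by omega
      subst hm
      refine ⟨hσ0, ?_⟩
      show π ∈ PiL L (1 + 1)
      rwa [show (1:ℤ)+1 = 2 by norm_num]
    · intro m hm1 hm2
      exfalso
      omega
    · simp only [Nat.cast_zero, zero_add]
      rw [Finset.Icc_self, Finset.sum_singleton, heq, h1 σ0 hσ0, zero_add]
  | succ k ih =>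
    intro π hπ
    have e1 : ((k+1:ℕ):ℤ) = (k:ℤ)+1 := by push_cast; ring
    rw [e1] at hπ ⊢
    have hπ3 : π ∈ PiL L ((k:ℤ)+3) := by
      rwa [show (k:ℤ)+1+2 = (k:ℤ)+3 by ring] at hπ
    have hfl := h3 ((k:ℤ)+3) (by omega) π hπ3
    have e2 : (k:ℤ)+3-1 = (k:ℤ)+2 := by ring
    rw [e2] at hfl
    have hne : {c : ℕ | ∃ π' ∈ PiR L ((k:ℤ)+2),
        c = fr π' ((k:ℤ)+2) + invCount π' π}.Nonempty :=
      ⟨_, ⟨piR0 L ((k:ℤ)+2), piR0_mem L ((k:ℤ)+2), rfl⟩⟩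
    obtain ⟨σ', hσ', heq1⟩ : ∃ π' ∈ PiR L ((k:ℤ)+2),
        fl π ((k:ℤ)+3) = fr π' ((k:ℤ)+2) + invCount π' π := by
      rw [hfl]
      exact Nat.sInf_mem hne
    have hfr := h2 ((k:ℤ)+2) (by omega) σ' hσ'
    have hne2 : {c : ℕ | ∃ π'' ∈ PiL L ((k:ℤ)+2),
        σ'.filter (passFilter ((k:ℤ)+2)) = π''.filter (passFilter ((k:ℤ)+2)) ∧
        c = fl π'' ((k:ℤ)+2)}.Nonempty := by
      obtain ⟨hm, hf⟩ := extL_spec hσ'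
      exact ⟨_, ⟨extL L σ' ((k:ℤ)+2), hm, hf, rfl⟩⟩
    obtain ⟨π'', hπ'', hagree, heq2⟩ : ∃ π'' ∈ PiL L ((k:ℤ)+2),
        σ'.filter (passFilter ((k:ℤ)+2)) = π''.filter (passFilter ((k:ℤ)+2)) ∧
        fr σ' ((k:ℤ)+2) = fl π'' ((k:ℤ)+2) := by
      rw [hfr]
      exact Nat.sInf_mem hne2
    obtain ⟨σ, τ, hmem, hag, hsum, htop⟩ := ih π'' hπ''
    refine ⟨Function.update σ ((k:ℤ)+2) σ', Function.update τ ((k:ℤ)+2) π,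
      ?_, ?_, ?_, ?_⟩
    · intro m hm1 hm2
      by_cases hm : m = (k:ℤ)+2
      · subst hm
        rw [Function.update_self, Function.update_self]
        refine ⟨hσ', ?_⟩
        rw [show (k:ℤ)+2+1 = (k:ℤ)+3 by ring]
        exact hπ3
      · rw [Function.update_of_ne hm, Function.update_of_ne hm]
        exact hmem m hm1 (by omega)
    · intro m hm1 hm2
      by_cases hm : m = (k:ℤ)+1
      · subst hm
        rw [Function.update_of_ne (by omega), show (k:ℤ)+1+1 = (k:ℤ)+2 by ring,
          Function.update_self, htop]
        exact hagree.symm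
      · rw [Function.update_of_ne (by omega), Function.update_of_ne (by omega)]
        exact hag m hm1 (by omega)
    · rw [show (k:ℤ)+1+2 = (k:ℤ)+3 by ring]
      rw [sum_Icc_int_succ _ ((k:ℤ)+1) (by omega)]
      rw [show (k:ℤ)+1+1 = (k:ℤ)+2 by ring]
      rw [Function.update_self, Function.update_self]
      have hsum' : ∑ m ∈ Finset.Icc (1:ℤ) ((k:ℤ)+1),
          invCount (Function.update σ ((k:ℤ)+2) σ' m) (Function.update τ ((k:ℤ)+2) π m) =
          ∑ m ∈ Finset.Icc (1:ℤ) ((k:ℤ)+1), invCount (σ m) (τ m) := by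
        apply Finset.sum_congr rfl
        intro m hm
        rw [Finset.mem_Icc] at hm
        rw [Function.update_of_ne (by omega), Function.update_of_ne (by omega)]
      rw [hsum', ← hsum, heq1, heq2]
    · rw [show (k:ℤ)+1+1 = (k:ℤ)+2 by ring, Function.update_self]

end Dom3

/-- correctness of the dynamic program for MLCM-P_PATH.  If
`fr`/`fl` satisfy the recurrences `fr(π,1) = 0`,
`fr(π,i) = min { fl(π',i) : π' agrees with π on the lines passing through i }`
and `fl(π,i) = min { fr(π',i-1) + t(π',π) }`, then
`min { fl(π,n) : π ∈ Π_n^ℓ }` equals the minimum number of crossings of an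
admissible periphery-respecting layout of the instance. -/
theorem stmt_17 (n : ℕ) (hn : 2 ≤ n) (L : Finset (ℤ × ℤ))
    (hL : ∀ p ∈ L, 1 ≤ p.1 ∧ p.1 < p.2 ∧ p.2 ≤ (n : ℤ))
    (fr fl : List (ℤ × ℤ) → ℤ → ℕ)
    (h1 : ∀ π ∈ PiR L 1, fr π 1 = 0)
    (h2 : ∀ i : ℤ, 1 < i → ∀ π ∈ PiR L i,
      fr π i = sInf {c : ℕ | ∃ π' ∈ PiL L i,
        π.filter (passFilter i) = π'.filter (passFilter i) ∧ c = fl π' i})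
    (h3 : ∀ i : ℤ, 1 < i → ∀ π ∈ PiL L i,
      fl π i = sInf {c : ℕ | ∃ π' ∈ PiR L (i - 1),
        c = fr π' (i - 1) + invCount π' π}) :
    sInf {c : ℕ | ∃ π ∈ PiL L (n : ℤ), c = fl π (n : ℤ)} =
    sInf {c : ℕ | ∃ Λ : PathLayout L, c = crossCount n L Λ} := by
  have hA : {c : ℕ | ∃ π ∈ PiL L (n:ℤ), c = fl π (n:ℤ)}.Nonempty :=
    ⟨_, ⟨piL0 L (n:ℤ), piL0_mem L (n:ℤ), rfl⟩⟩
  obtain ⟨πs, hπs, hval⟩ : ∃ π ∈ PiL L (n:ℤ),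
      sInf {c : ℕ | ∃ π ∈ PiL L (n:ℤ), c = fl π (n:ℤ)} = fl π (n:ℤ) := Nat.sInf_mem hA
  have ek2 : ((n-2:ℕ):ℤ) + 2 = (n:ℤ) := by omega
  have ek1 : ((n-2:ℕ):ℤ) + 1 = (n:ℤ) - 1 := by omega
  obtain ⟨σ, τ, hmem, hag, hsum, htop⟩ :=
    chain_exists fr fl h1 h2 h3 (n-2) πs (by rwa [ek2])
  rw [ek2] at hsum
  rw [ek1] at hsum hmem
  have hag' : ∀ m : ℤ, 1 ≤ m → m ≤ (n:ℤ) - 2 →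
      (τ m).filter (passFilter (m + 1)) = (σ (m + 1)).filter (passFilter (m + 1)) := by
    intro m hm1 hm2
    exact hag m hm1 (by omega)
  have hrange : ∀ m : ℤ, ∀ l ∈ L, Covers l m → 1 ≤ m ∧ m ≤ (n:ℤ) - 1 := by
    intro m l hl hc
    obtain ⟨a1, a2, a3⟩ := hL l hl
    obtain ⟨c1, c2⟩ := hc
    omega
  have hΛ : ∃ Λ0 : PathLayout L,
      crossCount n L Λ0 = ∑ m ∈ Finset.Icc (1:ℤ) ((n:ℤ)-1), invCount (σ m) (τ m) := by
    refine ⟨{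
      hl := fun m l => ((σ m).idxOf l : ℝ)
      hr := fun m l => ((τ m).idxOf l : ℝ)
      injL := ?_
      injR := ?_
      admissible := ?_
      periphL := ?_
      periphR := ?_ }, ?_⟩
    · intro m l hlL l' hl'L hc hc' heq
      obtain ⟨r1, r2⟩ := hrange m l hlL hc
      have hσm := (hmem m r1 r2).1
      have hl1 : l ∈ σ m := (PiR_mem_iff hσm).mpr ⟨hlL, hc⟩
      have hl2 : l' ∈ σ m := (PiR_mem_iff hσm).mpr ⟨hl'L, hc'⟩
      have := Nat.cast_inj.mp heq
      rw [idxP, idxP] at this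
      exact (List.idxOf_inj hl1).mp (by rwa [← idxP, ← idxP] at this)
    · intro m l hlL l' hl'L hc hc' heq
      obtain ⟨r1, r2⟩ := hrange m l hlL hc
      have hτm := (hmem m r1 r2).2
      have hl1 : l ∈ τ m := (PiL_mem_iff hτm).mpr ⟨hlL, by
        rw [show m + 1 - 1 = m by ring]; exact hc⟩
      have hl2 : l' ∈ τ m := (PiL_mem_iff hτm).mpr ⟨hl'L, by
        rw [show m + 1 - 1 = m by ring]; exact hc'⟩
      have := Nat.cast_inj.mp heq
      rw [idxP, idxP] at this
      exact (List.idxOf_inj hl1).mp (by rwa [← idxP, ← idxP] at this)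
    · intro m l hlL l' hl'L hcm hcm1 hcm' hcm1'
      obtain ⟨r1, r2⟩ := hrange m l hlL hcm
      obtain ⟨r1', r2'⟩ := hrange (m+1) l hlL hcm1
      have hτm := (hmem m r1 r2).2
      have hσm1 := (hmem (m+1) r1' r2').1
      have hagm := hag' m r1 (by omega)
      have hlτ : l ∈ τ m := (PiL_mem_iff hτm).mpr ⟨hlL, by
        rw [show m + 1 - 1 = m by ring]; exact hcm⟩
      have hl'τ : l' ∈ τ m := (PiL_mem_iff hτm).mpr ⟨hl'L, by
        rw [show m + 1 - 1 = m by ring]; exact hcm'⟩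
      have hlσ : l ∈ σ (m+1) := (PiR_mem_iff hσm1).mpr ⟨hlL, hcm1⟩
      have hl'σ : l' ∈ σ (m+1) := (PiR_mem_iff hσm1).mpr ⟨hl'L, hcm1'⟩
      have pl : passFilter (m+1) l = true := by
        rw [passFilter_eq_true]
        obtain ⟨b1, b2⟩ := hcm
        obtain ⟨b3, b4⟩ := hcm1
        omega
      have pl' : passFilter (m+1) l' = true := by
        rw [passFilter_eq_true]
        obtain ⟨b1, b2⟩ := hcm'
        obtain ⟨b3, b4⟩ := hcm1'
        omega
      rw [Nat.cast_lt, Nat.cast_lt, idxP, idxP, idxP, idxP]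
      exact idx_lt_iff_of_filter_eq (PiL_nodup hτm) (PiR_nodup hσm1) hagm
        hlτ hl'τ hlσ hl'σ pl pl'
    · intro l hlL
      have hLl := hL l hlL
      have hcov : Covers l l.1 := ⟨le_refl _, by omega⟩
      obtain ⟨r1, r2⟩ := hrange l.1 l hlL hcov
      have hσ := (hmem l.1 r1 r2).1
      have hlmem : l ∈ σ l.1 := (PiR_mem_iff hσ).mpr ⟨hlL, hcov⟩
      rcases hσ.2 l hlmem rfl with h | h
      · right
        intro l' hl'L hne hc' hlt
        have hl'mem : l' ∈ σ l.1 := (PiR_mem_iff hσ).mpr ⟨hl'L, hc'⟩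
        rw [Nat.cast_lt]
        exact h l' hl'mem hlt
      · left
        intro l' hl'L hne hc' hlt
        have hl'mem : l' ∈ σ l.1 := (PiR_mem_iff hσ).mpr ⟨hl'L, hc'⟩
        rw [Nat.cast_lt]
        exact h l' hl'mem hlt
    · intro l hlL
      have hLl := hL l hlL
      have hcov : Covers l (l.2 - 1) := ⟨by omega, by omega⟩
      obtain ⟨r1, r2⟩ := hrange (l.2 - 1) l hlL hcov
      have hτ := (hmem (l.2 - 1) r1 r2).2
      rw [show l.2 - 1 + 1 = l.2 by ring] at hτ
      have hlmem : l ∈ τ (l.2 - 1) := (PiL_mem_iff hτ).mpr ⟨hlL, by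
        rw [show l.2 - 1 = l.2 - 1 by ring]; exact hcov⟩
      rcases hτ.2 l hlmem rfl with h | h
      · right
        intro l' hl'L hne hc' hlt
        have hl'mem : l' ∈ τ (l.2 - 1) := (PiL_mem_iff hτ).mpr ⟨hl'L, hc'⟩
        rw [Nat.cast_lt]
        exact h l' hl'mem hlt
      · left
        intro l' hl'L hne hc' hlt
        have hl'mem : l' ∈ τ (l.2 - 1) := (PiL_mem_iff hτ).mpr ⟨hl'L, hc'⟩
        rw [Nat.cast_lt]
        exact h l' hl'mem hlt
    · unfold crossCount
      apply Finset.sum_congr rfl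
      intro m hm
      rw [Finset.mem_Icc] at hm
      have hτm := (hmem m hm.1 hm.2).2
      refine Eq.symm (inv_eq_cross m (σ m) (τ m)
        (fun l => ((σ m).idxOf l : ℝ)) (fun l => ((τ m).idxOf l : ℝ)) ?_ ?_ ?_)
      · have := PiL_toFinset hτm
        rwa [show m + 1 - 1 = m by ring] at this
      · intro a _ b _
        show ((((σ m).idxOf a : ℕ)) : ℝ) < (((σ m).idxOf b : ℕ) : ℝ) ↔ _
        exact_mod_cast Iff.rfl
      · intro a _ b _
        show ((((τ m).idxOf a : ℕ)) : ℝ) < (((τ m).idxOf b : ℕ) : ℝ) ↔ _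
        exact_mod_cast Iff.rfl
  obtain ⟨Λ0, hΛ0⟩ := hΛ
  have hB : {c : ℕ | ∃ Λ : PathLayout L, c = crossCount n L Λ}.Nonempty :=
    ⟨_, ⟨Λ0, rfl⟩⟩
  apply _root_.le_antisymm
  · -- sInf A ≤ sInf B
    obtain ⟨Λ1, hΛ1⟩ : ∃ Λ : PathLayout L,
        sInf {c : ℕ | ∃ Λ : PathLayout L, c = crossCount n L Λ} = crossCount n L Λ :=
      Nat.sInf_mem hB
    rw [hΛ1]
    have hup := up_bound fr fl h1 h2 h3 Λ1 (n-2)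
    rw [ek1, ek2] at hup
    calc sInf {c : ℕ | ∃ π ∈ PiL L (n:ℤ), c = fl π (n:ℤ)}
        ≤ fl (tauR L Λ1 ((n:ℤ)-1)) (n:ℤ) := by
          apply Nat.sInf_le
          refine ⟨tauR L Λ1 ((n:ℤ)-1), ?_, rfl⟩
          have := tauR_memPiL Λ1 ((n:ℤ)-1)
          rwa [show (n:ℤ)-1+1 = (n:ℤ) by ring] at this
      _ ≤ crossCount n L Λ1 := hup
  · -- sInf B ≤ sInf A
    rw [hval]
    calc sInf {c : ℕ | ∃ Λ : PathLayout L, c = crossCount n L Λ}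
        ≤ crossCount n L Λ0 := Nat.sInf_le ⟨Λ0, rfl⟩
      _ = fl πs (n:ℤ) := by rw [hΛ0, hsum]
end
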